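/- arXiv:2404.16291 — 4 statements merged into one kernel-verified Lean document; each statement's English description precedes it below -/
import Mathlib

section
/- Let r ∈ (0, +∞) and let y ∈ K{X/r}. Then y is a unit of the ring K{X/r} if and only if y ∈ K[[X/r]]_0 and y is a unit of the ring K[[X/r]]_0. In particular, every unit of K{X/r} satisfies sup_{0<s<r} |y|_s < ∞. -/
open scoped Classical
noncomputable section

namespace Ohkubo

/-- A derivation on a field: additive and satisfying the Leibniz rule. -/
structure IsDerivation {K : Type} [Field K] (d : K → K) : Prop where
  map_add : ∀ x y : K, d (x + y) = d x + d y
  leibniz : ∀ x y : K, d (x * y) = d x * y + x * d y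

/-- A map bounded for the norm. -/
def IsBoundedMap {K : Type} [NontriviallyNormedField K] (d : K → K) : Prop :=
  ∃ C : ℝ, ∀ x : K, ‖d x‖ ≤ C * ‖x‖

/-- Operator norm of a map with respect to a norm-like function `N`. -/
def opNormOn {V : Type} [Zero V] (N : V → ℝ) (f : V → V) : ℝ :=
  sSup {t : ℝ | ∃ v : V, v ≠ 0 ∧ t = N (f v) / N v}

/-- Spectral norm of a map with respect to a norm-like function `N`. -/
def spNormOn {V : Type} [Zero V] (N : V → ℝ) (f : V → V) : ℝ :=
  sInf {t : ℝ | ∃ n : ℕ, 1 ≤ n ∧ t = (opNormOn N (f^[n])) ^ ((n : ℝ)⁻¹)}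

/-- The residue characteristic `p(K)`: the unique prime `p` with `‖p‖ < 1`, if it exists,
and `0` otherwise. -/
def residueChar (K : Type) [NontriviallyNormedField K] : ℕ :=
  if h : ∃ p : ℕ, p.Prime ∧ ‖(p : K)‖ < 1 then h.choose else 0

/-- `ω(K) = |p(K)|^(1/(p(K)-1))` if `p(K) > 0`, and `1` otherwise. -/
def omegaK (K : Type) [NontriviallyNormedField K] : ℝ :=
  if residueChar K = 0 then 1
  else ‖((residueChar K : ℕ) : K)‖ ^ (((residueChar K : ℝ) - 1)⁻¹)

/-- The spectral norm of a map `K → K`, computed with the norm of `K`. -/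
def spNormK {K : Type} [NontriviallyNormedField K] (d : K → K) : ℝ :=
  spNormOn (fun x : K => ‖x‖) d

/-- `r(K,∂) = ω(K)/|∂|_sp`. -/
def radius {K : Type} [NontriviallyNormedField K] (d : K → K) : ℝ :=
  omegaK K / spNormK d

/-- The `i`-th term `‖a_i‖ s^i` entering the `s`-Gauss norm. -/
def gaussTerm {K : Type} [NontriviallyNormedField K] (s : ℝ) (f : PowerSeries K) (i : ℕ) : ℝ :=
  ‖(PowerSeries.coeff i) f‖ * s ^ i

/-- `|f|_s < ∞`. -/
def MemBd {K : Type} [NontriviallyNormedField K] (s : ℝ) (f : PowerSeries K) : Prop :=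
  BddAbove (Set.range (gaussTerm s f))

/-- `K[[X/s]]_0`, the power series with bounded `s`-Gauss norm. -/
def bdRing (K : Type) [NontriviallyNormedField K] (s : ℝ) : Set (PowerSeries K) :=
  {f | MemBd s f}

/-- `K{X/r}`, the power series convergent on the open disc of radius `r`. -/
def convRing (K : Type) [NontriviallyNormedField K] (r : ℝ) : Set (PowerSeries K) :=
  {f | ∀ s : ℝ, 0 < s → s < r → MemBd s f}

/-- The formal derivative `∂_X` of a power series. -/
def dX {K : Type} [Field K] (f : PowerSeries K) : PowerSeries K :=
  PowerSeries.mk fun i => ((i : K) + 1) * (PowerSeries.coeff (i + 1)) f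

/-- The Taylor map `g_0(c) = Σ_i (∂^i(c)/i!) X^i`. -/
def taylor {K : Type} [Field K] (d : K → K) (c : K) : PowerSeries K :=
  PowerSeries.mk fun i => d^[i] c / (i.factorial : K)

/-- A (nonarchimedean, multiplicatively compatible) norm on a `K`-vector space. -/
def CompatNorm (K : Type) {V : Type} [NontriviallyNormedField K] [AddCommGroup V] [Module K V]
    (N : V → ℝ) : Prop :=
  (∀ v : V, 0 ≤ N v) ∧ (∀ v : V, N v = 0 ↔ v = 0) ∧
    (∀ x y : V, N (x + y) ≤ max (N x) (N y)) ∧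
    ∀ (c : K) (v : V), N (c • v) = ‖c‖ * N v

/-- The spectral norm of `f` equals `c` (computed with any compatible norm; the value is
independent of the choice). -/
def HasSpNorm (K : Type) {V : Type} [NontriviallyNormedField K] [AddCommGroup V] [Module K V]
    (f : V → V) (c : ℝ) : Prop :=
  ∃ N : V → ℝ, CompatNorm K N ∧ spNormOn N f = c

/-- A differential operator on `V` relative to the derivation `d`. -/
def IsDiffOp {K V : Type} [NontriviallyNormedField K] [AddCommGroup V] [Module K V]
    (d : K → K) (D : V → V) : Prop :=
  (∀ x y : V, D (x + y) = D x + D y) ∧ ∀ (c : K) (v : V), D (c • v) = d c • v + c • D v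

/-- `(V, D)` is an irreducible differential module. -/
def IsIrred (K : Type) (V : Type) [NontriviallyNormedField K] [AddCommGroup V] [Module K V]
    (D : V → V) : Prop :=
  (∃ v : V, v ≠ 0) ∧ ∀ p : Submodule K V, (∀ x ∈ p, D x ∈ p) → p = ⊥ ∨ p = ⊤

/-- `DW` is the operator induced by `D` on the subquotient `q ⧸ p`. -/
def InducedOn {K V : Type} [NontriviallyNormedField K] [AddCommGroup V] [Module K V]
    (D : V → V) (p q : Submodule K V)
    (DW : (↥q ⧸ p.comap q.subtype) → (↥q ⧸ p.comap q.subtype)) : Prop :=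
  ∀ (x : V) (hx : x ∈ q) (hDx : D x ∈ q),
    DW (Submodule.Quotient.mk ⟨x, hx⟩) = Submodule.Quotient.mk ⟨D x, hDx⟩

/-- Every irreducible subquotient of `(V, D)` has spectral norm `c`. -/
def PureRadius (K : Type) (V : Type) [NontriviallyNormedField K] [AddCommGroup V] [Module K V]
    (D : V → V) (c : ℝ) : Prop :=
  ∀ p q : Submodule K V, p ≤ q → (∀ x ∈ p, D x ∈ p) → (∀ x ∈ q, D x ∈ q) →
    ∀ DW : (↥q ⧸ p.comap q.subtype) → (↥q ⧸ p.comap q.subtype),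
      InducedOn D p q DW → IsIrred K (↥q ⧸ p.comap q.subtype) DW → HasSpNorm K DW c

/-- `V_r`: the sum of all `D`-stable subspaces all of whose irreducible subquotients have
spectral norm `ω(K)/r`. -/
def pureSub (K : Type) {V : Type} [NontriviallyNormedField K] [AddCommGroup V] [Module K V]
    (D : V → V) (r : ℝ) : Submodule K V :=
  sSup {p : Submodule K V | ∃ hp : ∀ x ∈ p, D x ∈ p,
    PureRadius K ↥p (fun y : ↥p => (⟨D y.1, hp y.1 y.2⟩ : ↥p)) (omegaK K / r)}

/-- `V_{r_J}`: the sum of all subspaces stable under all the `D j` all of whose irreducible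
`D j`-subquotients have spectral norm `ω(K)/r_j`, for every `j`. -/
def pureSubFam (K : Type) {V J : Type} [NontriviallyNormedField K] [AddCommGroup V] [Module K V]
    (D : J → V → V) (rJ : J → ℝ) : Submodule K V :=
  sSup {p : Submodule K V | ∃ hp : ∀ (j : J), ∀ x ∈ p, D j x ∈ p,
    ∀ j : J, PureRadius K ↥p (fun y : ↥p => (⟨D j y.1, hp j y.1 y.2⟩ : ↥p)) (omegaK K / rJ j)}

/-- A solution map: an additive map `V → K[[X]]` semilinear for the Taylor map and
intertwining `D` with `∂_X`. -/
def IsSolMap {K V : Type} [NontriviallyNormedField K] [AddCommGroup V] [Module K V]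
    (d : K → K) (D : V → V) (s : V → PowerSeries K) : Prop :=
  (∀ x y : V, s (x + y) = s x + s y) ∧
    (∀ (c : K) (v : V), s (c • v) = taylor d c * s v) ∧
    ∀ v : V, s (D v) = dX (s v)

/-- `y` is a unit of the (sub)ring determined by the subset `S` of `K[[X]]`. -/
def UnitIn {K : Type} [NontriviallyNormedField K] (S : Set (PowerSeries K))
    (y : PowerSeries K) : Prop :=
  y ∈ S ∧ ∃ z ∈ S, y * z = 1 ∧ z * y = 1


/-- Nonarchimedean bound for finite sums. -/
private lemma nonarch_sum {K : Type} [NontriviallyNormedField K]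
    (hna : IsNonarchimedean fun x : K => ‖x‖) {β : Type} (f : β → K) (s : Finset β)
    (hs : s.Nonempty) : ∃ b ∈ s, ‖∑ x ∈ s, f x‖ ≤ ‖f b‖ := by
  classical
  induction s using Finset.induction_on with
  | empty => exact absurd hs (by simp)
  | @insert a s ha ih =>
    rw [Finset.sum_insert ha]
    by_cases hsne : s.Nonempty
    · rcases ih hsne with ⟨b, hb, hble⟩
      rcases le_total ‖∑ x ∈ s, f x‖ ‖f a‖ with h | h
      · refine ⟨a, Finset.mem_insert_self a s, le_trans (hna _ _) ?_⟩
        exact max_le le_rfl h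
      · refine ⟨b, Finset.mem_insert_of_mem hb, le_trans (hna _ _) ?_⟩
        exact max_le (le_trans h hble) hble
    · rw [Finset.not_nonempty_iff_eq_empty] at hsne
      subst hsne
      exact ⟨a, Finset.mem_insert_self a _, by simp⟩

/-- A nonnegative function tending to 0 with positive value at 0 attains its max at a
minimal index. -/
private lemma exists_min_argmax (g : ℕ → ℝ) (h0 : Filter.Tendsto g Filter.atTop (nhds 0))
    (hpos : 0 < g 0) : ∃ i, (∀ k, g k ≤ g i) ∧ (∀ k < i, g k < g i) := by
  have hev : ∀ᶠ n in Filter.atTop, g n < g 0 := by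
    have := h0.eventually (eventually_lt_nhds hpos)
    simpa using this
  rcases Filter.eventually_atTop.1 hev with ⟨N, hN⟩
  have hmax : ∃ i, ∀ k, g k ≤ g i := by
    obtain ⟨i, hi, hig⟩ := (Finset.range (N + 1)).exists_max_image g ⟨0, by simp⟩
    refine ⟨i, fun k => ?_⟩
    by_cases hk : k ≤ N
    · exact hig k (Finset.mem_range.2 (Nat.lt_succ_of_le hk))
    · exact le_trans (hN k (le_of_not_ge hk)).le
        (hig 0 (Finset.mem_range.2 (Nat.succ_pos N)))
  classical
  set i := Nat.find hmax with hi
  refine ⟨i, Nat.find_spec hmax, fun k hk => ?_⟩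
  have hknot := Nat.find_min hmax hk
  push_neg at hknot
  obtain ⟨m, hm⟩ := hknot
  exact lt_of_lt_of_le hm (Nat.find_spec hmax m)

/-- For a convergent series, the Gauss terms tend to zero inside the disc. -/
private lemma gaussTerm_tendsto_zero {K : Type} [NontriviallyNormedField K]
    {r : ℝ} {f : PowerSeries K} (hf : f ∈ convRing K r) {s : ℝ} (hs : 0 < s) (hsr : s < r) :
    Filter.Tendsto (gaussTerm s f) Filter.atTop (nhds 0) := by
  set t : ℝ := (s + r) / 2 with ht
  have hst : s < t := by rw [ht]; linarith
  have htr : t < r := by rw [ht]; linarith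
  have htpos : 0 < t := lt_trans hs hst
  obtain ⟨C, hC⟩ := hf t htpos htr
  have hCb : ∀ i, gaussTerm t f i ≤ C := fun i => hC ⟨i, rfl⟩
  have hC0 : 0 ≤ C := le_trans (by simp [gaussTerm]) (hCb 0)
  have hkey : ∀ i, gaussTerm s f i ≤ C * (s / t) ^ i := by
    intro i
    have : gaussTerm s f i = gaussTerm t f i * (s / t) ^ i := by
      simp only [gaussTerm, div_pow, mul_assoc]
      rw [mul_div_assoc']
      congr 1
      field_simp
    rw [this]
    have hq : (0:ℝ) ≤ (s / t) ^ i := by positivity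
    exact mul_le_mul_of_nonneg_right (hCb i) hq
  have hlim : Filter.Tendsto (fun i : ℕ => C * (s / t) ^ i) Filter.atTop (nhds 0) := by
    have : Filter.Tendsto (fun i : ℕ => (s / t) ^ i) Filter.atTop (nhds 0) :=
      tendsto_pow_atTop_nhds_zero_of_lt_one (by positivity)
        ((div_lt_one htpos).2 hst)
    simpa using this.const_mul C
  refine squeeze_zero (fun i => ?_) hkey hlim
  simp only [gaussTerm]
  positivity

/-- Key estimate: if `y z = 1` with both convergent, every Gauss term of `y` inside the
disc is at most `‖coeff 0 y‖`. -/
private lemma gaussTerm_le_const {K : Type} [NontriviallyNormedField K]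
    (hna : IsNonarchimedean fun x : K => ‖x‖)
    {r : ℝ} {y z : PowerSeries K} (hy : y ∈ convRing K r) (hz : z ∈ convRing K r)
    (hyz : y * z = 1) {s : ℝ} (hs : 0 < s) (hsr : s < r) :
    ∀ i, gaussTerm s y i ≤ ‖(PowerSeries.coeff 0) y‖ := by
  have ha0b0 : (PowerSeries.coeff 0) y * (PowerSeries.coeff 0) z = 1 := by
    have := congrArg (PowerSeries.constantCoeff) hyz
    simpa [PowerSeries.coeff_zero_eq_constantCoeff, map_mul] using this
  have ha0 : (PowerSeries.coeff 0) y ≠ 0 := left_ne_zero_of_mul_eq_one ha0b0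
  have hb0 : (PowerSeries.coeff 0) z ≠ 0 := right_ne_zero_of_mul_eq_one ha0b0
  set g : ℕ → ℝ := gaussTerm s y with hg
  set h : ℕ → ℝ := gaussTerm s z with hh
  have hg0 : 0 < g 0 := by simpa [hg, gaussTerm, norm_pos_iff] using ha0
  have hh0 : 0 < h 0 := by simpa [hh, gaussTerm, norm_pos_iff] using hb0
  obtain ⟨i, hiMax, hiMin⟩ := exists_min_argmax g (gaussTerm_tendsto_zero hy hs hsr) hg0
  obtain ⟨j, hjMax, hjMin⟩ := exists_min_argmax h (gaussTerm_tendsto_zero hz hs hsr) hh0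
  have hA : 0 < g i := lt_of_lt_of_le hg0 (hiMax 0)
  have hB : 0 < h j := lt_of_lt_of_le hh0 (hjMax 0)
  -- claim: i = 0
  have hi0 : i = 0 ∧ j = 0 := by
    by_contra hij
    have hij1 : 1 ≤ i + j := by
      rcases Nat.eq_zero_or_pos (i + j) with h0 | h1
      · exact absurd ⟨Nat.eq_zero_of_add_eq_zero_right h0,
          Nat.eq_zero_of_add_eq_zero_left h0⟩ hij
      · exact h1
    -- coefficient of the product at i + j is 0
    have hcoeff : (PowerSeries.coeff (i + j)) (y * z) = 0 := by
      rw [hyz, PowerSeries.coeff_one, if_neg (by omega)]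
    rw [PowerSeries.coeff_mul] at hcoeff
    set F : ℕ × ℕ → K := fun p => (PowerSeries.coeff p.1) y * (PowerSeries.coeff p.2) z
      with hF
    have hmem : ((i, j) : ℕ × ℕ) ∈ Finset.HasAntidiagonal.antidiagonal (i + j) := by
      simp
    have hsplit : F (i, j) + ∑ p ∈ (Finset.HasAntidiagonal.antidiagonal (i + j)).erase (i, j), F p = 0 := by
      rw [Finset.add_sum_erase _ F hmem]; exact hcoeff
    have hFij : F (i, j) = -∑ p ∈ (Finset.HasAntidiagonal.antidiagonal (i + j)).erase (i, j), F p := by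
      exact eq_neg_of_add_eq_zero_left hsplit
    -- the erased set is nonempty
    have hne : ((Finset.HasAntidiagonal.antidiagonal (i + j)).erase (i, j)).Nonempty := by
      rcases Nat.eq_zero_or_pos i with hi' | hi'
      · refine ⟨(i + j, 0), Finset.mem_erase.2 ⟨?_, by simp⟩⟩
        intro hcontra
        rw [Prod.mk.injEq] at hcontra
        omega
      · refine ⟨(0, i + j), Finset.mem_erase.2 ⟨?_, by simp⟩⟩
        intro hcontra
        rw [Prod.mk.injEq] at hcontra
        omega
    obtain ⟨p, hp, hple⟩ := nonarch_sum hna F _ hne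
    obtain ⟨hpne, hpsum⟩ := Finset.mem_erase.1 hp
    have hpadd : p.1 + p.2 = i + j := Finset.HasAntidiagonal.mem_antidiagonal.1 hpsum
    -- norms
    have hnorm1 : ‖F (i, j)‖ = g i * h j / s ^ (i + j) := by
      simp only [hF, norm_mul, hg, hh, gaussTerm]
      field_simp
      ring
    have hnorm2 : ‖F p‖ = g p.1 * h p.2 / s ^ (i + j) := by
      simp only [hF, norm_mul, hg, hh, gaussTerm]
      rw [← hpadd, pow_add]
      field_simp
    have hFle : ‖F (i, j)‖ ≤ ‖F p‖ := by
      rw [hFij, norm_neg]; exact hple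
    rw [hnorm1, hnorm2] at hFle
    have hspow : (0:ℝ) < s ^ (i + j) := by positivity
    have hprodle : g i * h j ≤ g p.1 * h p.2 :=
      (div_le_div_iff_of_pos_right hspow).1 hFle
    -- strict inequality the other way
    have hlt : g p.1 * h p.2 < g i * h j := by
      have hp1 : p.1 ≠ i := by
        intro hcontra
        apply hpne
        have : p.2 = j := by omega
        exact Prod.ext hcontra this
      rcases lt_or_gt_of_ne hp1 with hlt1 | hgt1
      · calc g p.1 * h p.2 ≤ g p.1 * h j :=
              mul_le_mul_of_nonneg_left (hjMax p.2) (by simp [hg, gaussTerm]; positivity)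
          _ < g i * h j := mul_lt_mul_of_pos_right (hiMin p.1 hlt1) hB
      · have hp2 : p.2 < j := by omega
        calc g p.1 * h p.2 ≤ g i * h p.2 :=
              mul_le_mul_of_nonneg_right (hiMax p.1) (by simp [hh, gaussTerm]; positivity)
          _ < g i * h j := mul_lt_mul_of_pos_left (hjMin p.2 hp2) hA
    exact absurd hprodle (not_le.2 hlt)
  intro k
  have : g i = ‖(PowerSeries.coeff 0) y‖ := by
    rw [hi0.1]; simp [hg, gaussTerm]
  rw [← this]; exact hiMax k

/-- The bounded ring is contained in the convergent ring. -/
private lemma bdRing_subset_convRing {K : Type} [NontriviallyNormedField K]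
    {r : ℝ} (hr : 0 < r) : bdRing K r ⊆ convRing K r := by
  intro f hf s hs hsr
  obtain ⟨C, hC⟩ := hf
  refine ⟨C, fun x hx => ?_⟩
  obtain ⟨i, rfl⟩ := hx
  refine le_trans ?_ (hC ⟨i, rfl⟩)
  simp only [gaussTerm]
  exact mul_le_mul_of_nonneg_left (pow_le_pow_left₀ hs.le hsr.le i) (norm_nonneg _)

/-- Passing the Gauss-term bound to the boundary radius. -/
private lemma gaussTerm_r_le {K : Type} [NontriviallyNormedField K]
    {r C : ℝ} (hr : 0 < r) {f : PowerSeries K}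
    (hb : ∀ s : ℝ, 0 < s → s < r → ∀ i, gaussTerm s f i ≤ C) :
    ∀ i, gaussTerm r f i ≤ C := by
  intro i
  have hcont : Filter.Tendsto (fun s : ℝ => ‖(PowerSeries.coeff i) f‖ * s ^ i)
      (nhdsWithin r (Set.Iio r)) (nhds (‖(PowerSeries.coeff i) f‖ * r ^ i)) := by
    exact ((continuous_const.mul (continuous_pow i)).tendsto r).mono_left
      nhdsWithin_le_nhds
  refine le_of_tendsto hcont ?_
  have h1 : ∀ᶠ s in nhdsWithin r (Set.Iio r), s ∈ Set.Iio r := self_mem_nhdsWithin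
  have h2 : ∀ᶠ s in nhdsWithin r (Set.Iio r), 0 < s :=
    Filter.Eventually.filter_mono nhdsWithin_le_nhds (eventually_gt_nhds hr)
  filter_upwards [h1, h2] with s hs1 hs2
  exact hb s hs2 hs1 i

/-- Units of `K{X/r}` are exactly the elements of `K[[X/r]]₀` that are
units of `K[[X/r]]₀`; in particular every unit of `K{X/r}` has bounded Gauss norms
`|y|_s`, `0 < s < r`. -/
theorem units_of_convRing
    (K : Type) [NontriviallyNormedField K] [CompleteSpace K]
    (hna : IsNonarchimedean fun x : K => ‖x‖)
    (r : ℝ) (hr : 0 < r) (y : PowerSeries K) (hy : y ∈ convRing K r) :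
    (UnitIn (convRing K r) y ↔ y ∈ bdRing K r ∧ UnitIn (bdRing K r) y) ∧
      (UnitIn (convRing K r) y →
        ∃ C : ℝ, ∀ s : ℝ, 0 < s → s < r → ∀ i : ℕ,
          ‖(PowerSeries.coeff i) y‖ * s ^ i ≤ C) := by
  constructor
  · constructor
    · rintro ⟨hyC, z, hzC, hyz, hzy⟩
      have hybd : y ∈ bdRing K r := by
        refine ⟨‖(PowerSeries.coeff 0) y‖, fun x hx => ?_⟩
        obtain ⟨i, rfl⟩ := hx
        exact gaussTerm_r_le hr
          (fun s hs hsr i => gaussTerm_le_const hna hyC hzC hyz hs hsr i) i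
      have hzbd : z ∈ bdRing K r := by
        refine ⟨‖(PowerSeries.coeff 0) z‖, fun x hx => ?_⟩
        obtain ⟨i, rfl⟩ := hx
        exact gaussTerm_r_le hr
          (fun s hs hsr i => gaussTerm_le_const hna hzC hyC hzy hs hsr i) i
      exact ⟨hybd, hybd, z, hzbd, hyz, hzy⟩
    · rintro ⟨hyb, hyb', z, hzb, hyz, hzy⟩
      exact ⟨bdRing_subset_convRing hr hyb, z, bdRing_subset_convRing hr hzb, hyz, hzy⟩
  · rintro ⟨hyC, z, hzC, hyz, hzy⟩
    exact ⟨‖(PowerSeries.coeff 0) y‖, fun s hs hsr i =>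
      gaussTerm_le_const hna hyC hzC hyz hs hsr i⟩


end Ohkubo
end
end

section
/- Let r ∈ (0, +∞) and let x ∈ K{X/r} be such that ∂_X(x) = u·x for some u ∈ K{X/r}. Then either x = 0 or x is a unit of the ring K{X/r}. Similarly, if x ∈ K[[X/r]]_0 and ∂_X(x) = u·x for some u ∈ K[[X/r]]_0, then either x = 0 or x is a unit of the ring K[[X/r]]_0. -/
/-!
Fix `0 < t < r` and let `N` be the dominant index of `x` at `t`: the largest `i` at which
`‖aᵢ‖ tⁱ` attains `|x|_t`. Over an ultrametric field dominant indices add under multiplication.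
Iterating the equation gives `∂ᴺ x = v x` with `v` in the same ring. In `∂ᴺ x` the constant term
`N! a_N` is strictly dominant, because the other coefficients are `N! (m+N choose N) a_{m+N}` and
binomial coefficients have norm at most `1`; so `0 = J + N` with `J` the dominant index of `v`,
i.e. `N = 0`. Hence `|x|_t = ‖x(0)‖` for every `t < r`, so `x(0) ≠ 0`, and the recursion for the
coefficients of `x⁻¹` gives `|x⁻¹|_t ≤ ‖x(0)‖⁻¹`; letting `t → r` handles `K[[X/r]]₀`.
-/

open scoped Classical
noncomputable section

namespace Ohkubo

open PowerSeries Filter Topology Finset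

lemma norm_sum_lt_of_forall_lt {M ι : Type*} [SeminormedAddCommGroup M] [IsUltrametricDist M]
    {s : Finset ι} {f : ι → M} {C : ℝ} (hC : 0 < C) (h : ∀ i ∈ s, ‖f i‖ < C) :
    ‖∑ i ∈ s, f i‖ < C := by
  rcases s.eq_empty_or_nonempty with rfl | hs
  · simpa using hC
  obtain ⟨i, hi, hle⟩ := IsUltrametricDist.exists_norm_finsetSum_le_of_nonempty hs f
  exact hle.trans_lt (h i hi)

lemma exists_last_argmax_of_tendsto_zero {d : ℕ → ℝ} (hd : Tendsto d atTop (𝓝 0))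
    {j₁ : ℕ} (hj₁ : 0 < d j₁) : ∃ N, (∀ j, d j ≤ d N) ∧ ∀ j, N < j → d j < d N := by
  obtain ⟨M, hM⟩ := eventually_atTop.1 (hd.eventually (gt_mem_nhds hj₁))
  set S := (range M).filter fun j => d j₁ ≤ d j
  have hj₁S : j₁ ∈ S := by
    simp only [S, mem_filter, mem_range, le_refl, and_true]
    by_contra! h
    exact (hM j₁ h).false
  -- maximise `(d j, j)` lexicographically, so that ties are broken towards the last index
  obtain ⟨N, hNS, hN⟩ := S.exists_max_image (fun j => toLex (d j, j)) ⟨j₁, hj₁S⟩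
  have hN₁ : d j₁ ≤ d N := (mem_filter.1 hNS).2
  have hlex : ∀ j, d j < d N ∨ d j = d N ∧ j ≤ N := by
    intro j
    by_cases hj : j ∈ S
    · exact Prod.Lex.toLex_le_toLex.1 (hN j hj)
    · left
      simp only [S, mem_filter, mem_range, not_and, not_le] at hj
      by_cases hjM : j < M
      · exact (hj hjM).trans_le hN₁
      · exact (hM j (not_lt.1 hjM)).trans_le hN₁
  refine ⟨N, fun j => ?_, fun j hj => ?_⟩
  · rcases hlex j with h | h
    exacts [h.le, h.1.le]
  · rcases hlex j with h | h
    exacts [h, absurd h.2 (not_le.2 hj)]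

section Derivative

variable {K : Type} [Field K]

lemma dX_eq_derivative : (dX : K⟦X⟧ → K⟦X⟧) = d⁄dX K := by
  funext f
  ext n
  simp [dX, coeff_derivative, mul_comm]

lemma dX_mul (f g : K⟦X⟧) : dX (f * g) = dX f * g + f * dX g := by
  rw [dX_eq_derivative, Derivation.leibniz, smul_eq_mul, smul_eq_mul]
  ring

lemma coeff_iterate_dX (f : K⟦X⟧) (N m : ℕ) :
    coeff m (dX^[N] f) = (N.factorial : K) * ((m + N).choose N : K) * coeff (m + N) f := by
  rw [dX_eq_derivative, coeff_iterate_derivative, Nat.ascFactorial_eq_factorial_mul_choose]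
  push_cast
  ring

end Derivative

section GaussNorm

variable {K : Type} [NontriviallyNormedField K] {t s : ℝ} {f g : K⟦X⟧}

lemma memBd_iff : MemBd s f ↔ ∃ C, ∀ i, gaussTerm s f i ≤ C := by
  simp [MemBd, bddAbove_def]

lemma gaussTerm_nonneg (ht : 0 ≤ t) (f : K⟦X⟧) (i : ℕ) : 0 ≤ gaussTerm t f i := by
  unfold gaussTerm
  positivity

lemma gaussTerm_mul_gaussTerm (f g : K⟦X⟧) (i j : ℕ) :
    gaussTerm t f i * gaussTerm t g j = ‖coeff i f * coeff j g‖ * t ^ (i + j) := by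
  simp only [gaussTerm, norm_mul, pow_add]
  ring

lemma gaussTerm_le_of_forall_lt (hs : 0 < s) {i : ℕ} {C : ℝ}
    (h : ∀ t ∈ Set.Ioo 0 s, gaussTerm t f i ≤ C) : gaussTerm s f i ≤ C := by
  have hcont : Continuous fun t => gaussTerm t f i := by
    unfold gaussTerm
    fun_prop
  have hclosure := closure_minimal h (isClosed_le hcont continuous_const)
  rw [closure_Ioo hs.ne] at hclosure
  exact hclosure (Set.right_mem_Icc.2 hs.le)

lemma MemBd.tendsto_gaussTerm (ht : 0 ≤ t) (hts : t < s) (hf : MemBd s f) :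
    Tendsto (gaussTerm t f) atTop (𝓝 0) := by
  obtain ⟨C, hC⟩ := memBd_iff.1 hf
  have hs : 0 < s := ht.trans_lt hts
  have hgeom : Tendsto (fun i : ℕ => C * (t / s) ^ i) atTop (𝓝 0) := by
    simpa using (tendsto_pow_atTop_nhds_zero_of_lt_one (by positivity)
      ((div_lt_one hs).2 hts)).const_mul C
  refine squeeze_zero (gaussTerm_nonneg ht f) (fun i => ?_) hgeom
  calc gaussTerm t f i = gaussTerm s f i * (t / s) ^ i := by
        simp only [gaussTerm, div_pow]
        field_simp
    _ ≤ C * (t / s) ^ i := by gcongr; exact hC i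

lemma memBd_one : MemBd s (1 : K⟦X⟧) := by
  refine memBd_iff.2 ⟨1, fun i => ?_⟩
  rcases i with _ | i <;> simp [gaussTerm, coeff_one]

lemma MemBd.add (hs : 0 ≤ s) (hf : MemBd s f) (hg : MemBd s g) : MemBd s (f + g) := by
  obtain ⟨C, hC⟩ := memBd_iff.1 hf
  obtain ⟨D, hD⟩ := memBd_iff.1 hg
  refine memBd_iff.2 ⟨C + D, fun i => ?_⟩
  calc gaussTerm s (f + g) i ≤ gaussTerm s f i + gaussTerm s g i := by
        simp only [gaussTerm, map_add, ← add_mul]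
        gcongr
        exact norm_add_le _ _
    _ ≤ C + D := add_le_add (hC i) (hD i)

lemma gaussTerm_iterate_dX_mul_pow (f : K⟦X⟧) (N m : ℕ) :
    gaussTerm t (dX^[N] f) m * t ^ N
      = ‖(N.factorial : K)‖ * ‖((m + N).choose N : K)‖ * gaussTerm t f (m + N) := by
  simp only [gaussTerm, coeff_iterate_dX, norm_mul, pow_add]
  ring

variable [IsUltrametricDist K]

lemma exists_gaussTerm_mul_le (ht : 0 ≤ t) (f g : K⟦X⟧) (n : ℕ) :
    ∃ i j, i + j = n ∧ gaussTerm t (f * g) n ≤ gaussTerm t f i * gaussTerm t g j := by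
  obtain ⟨⟨i, j⟩, hij, hle⟩ := IsUltrametricDist.exists_norm_finsetSum_le_of_nonempty
    (HasAntidiagonal.nonempty_antidiagonal n) fun p => coeff p.1 f * coeff p.2 g
  rw [HasAntidiagonal.mem_antidiagonal] at hij
  refine ⟨i, j, hij, ?_⟩
  rw [gaussTerm_mul_gaussTerm, hij, gaussTerm, coeff_mul]
  gcongr

lemma MemBd.mul (hs : 0 ≤ s) (hf : MemBd s f) (hg : MemBd s g) : MemBd s (f * g) := by
  obtain ⟨C, hC⟩ := memBd_iff.1 hf
  obtain ⟨D, hD⟩ := memBd_iff.1 hg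
  refine memBd_iff.2 ⟨C * D, fun n => ?_⟩
  obtain ⟨i, j, -, hle⟩ := exists_gaussTerm_mul_le hs f g n
  exact hle.trans (mul_le_mul (hC i) (hD j) (gaussTerm_nonneg hs g j)
    ((gaussTerm_nonneg hs f i).trans (hC i)))

lemma MemBd.dX (hs : 0 < s) (hf : MemBd s f) : MemBd s (Ohkubo.dX f) := by
  obtain ⟨C, hC⟩ := memBd_iff.1 hf
  refine memBd_iff.2 ⟨C / s, fun i => ?_⟩
  rw [le_div_iff₀ hs]
  calc gaussTerm s (Ohkubo.dX f) i * s = ‖((i + 1 : ℕ) : K)‖ * gaussTerm s f (i + 1) := by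
        simp only [gaussTerm, Ohkubo.dX, coeff_mk, norm_mul, pow_succ]
        push_cast
        ring
    _ ≤ 1 * gaussTerm s f (i + 1) := by
        gcongr
        exacts [gaussTerm_nonneg hs.le f _, IsUltrametricDist.norm_natCast_le_one _ _]
    _ ≤ C := by simpa using hC (i + 1)

end GaussNorm

section DominantIndex

variable {K : Type} [NontriviallyNormedField K] {t s : ℝ} {f g : K⟦X⟧} {M N : ℕ}

def IsDominantIndex (t : ℝ) (f : K⟦X⟧) (N : ℕ) : Prop :=
  (∀ j, gaussTerm t f j ≤ gaussTerm t f N) ∧ ∀ j, N < j → gaussTerm t f j < gaussTerm t f N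

lemma IsDominantIndex.gaussTerm_pos (ht : 0 ≤ t) (hf : IsDominantIndex t f N) :
    0 < gaussTerm t f N :=
  (gaussTerm_nonneg ht f _).trans_lt (hf.2 _ N.lt_succ_self)

lemma IsDominantIndex.coeff_ne_zero (ht : 0 ≤ t) (hf : IsDominantIndex t f N) :
    coeff N f ≠ 0 := by
  intro h
  simpa [gaussTerm, h] using hf.gaussTerm_pos ht

lemma IsDominantIndex.unique (hM : IsDominantIndex t f M) (hN : IsDominantIndex t f N) :
    M = N := by
  by_contra! h
  rcases h.lt_or_gt with h | h
  · exact (hM.2 N h).not_ge (hN.1 M)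
  · exact (hN.2 M h).not_ge (hM.1 N)

lemma exists_isDominantIndex (ht : 0 < t) (hts : t < s) (hf : MemBd s f) (hf0 : f ≠ 0) :
    ∃ N, IsDominantIndex t f N := by
  obtain ⟨j, hj⟩ := exists_coeff_ne_zero_iff_ne_zero.2 hf0
  exact exists_last_argmax_of_tendsto_zero (hf.tendsto_gaussTerm ht.le hts)
    (by unfold gaussTerm; positivity)

lemma IsDominantIndex.gaussTerm_mul_lt (ht : 0 ≤ t) (hf : IsDominantIndex t f M)
    (hg : IsDominantIndex t g N) {i j : ℕ} (hij : M < i ∨ N < j) :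
    gaussTerm t f i * gaussTerm t g j < gaussTerm t f M * gaussTerm t g N := by
  rcases hij with hi | hj
  · calc gaussTerm t f i * gaussTerm t g j ≤ gaussTerm t f i * gaussTerm t g N :=
          mul_le_mul_of_nonneg_left (hg.1 j) (gaussTerm_nonneg ht f i)
      _ < gaussTerm t f M * gaussTerm t g N :=
          mul_lt_mul_of_pos_right (hf.2 i hi) (hg.gaussTerm_pos ht)
  · calc gaussTerm t f i * gaussTerm t g j ≤ gaussTerm t f M * gaussTerm t g j :=
          mul_le_mul_of_nonneg_right (hf.1 i) (gaussTerm_nonneg ht g j)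
      _ < gaussTerm t f M * gaussTerm t g N :=
          mul_lt_mul_of_pos_left (hg.2 j hj) (hf.gaussTerm_pos ht)

variable [IsUltrametricDist K]

theorem IsDominantIndex.mul (ht : 0 ≤ t) (hf : IsDominantIndex t f M)
    (hg : IsDominantIndex t g N) : IsDominantIndex t (f * g) (M + N) := by
  have htop : gaussTerm t (f * g) (M + N) = gaussTerm t f M * gaussTerm t g N := by
    have hmem : (M, N) ∈ antidiagonal (M + N) := HasAntidiagonal.mem_antidiagonal.2 rfl
    have hrest : ‖∑ p ∈ (antidiagonal (M + N)).erase (M, N), coeff p.1 f * coeff p.2 g‖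
        < ‖coeff M f * coeff N g‖ := by
      refine norm_sum_lt_of_forall_lt
        (norm_pos_iff.2 (mul_ne_zero (hf.coeff_ne_zero ht) (hg.coeff_ne_zero ht))) fun p hp => ?_
      obtain ⟨hpMN, hp⟩ := mem_erase.1 hp
      rw [HasAntidiagonal.mem_antidiagonal] at hp
      have hlt := hf.gaussTerm_mul_lt ht hg (i := p.1) (j := p.2) (by grind)
      rw [gaussTerm_mul_gaussTerm, gaussTerm_mul_gaussTerm, hp] at hlt
      exact lt_of_mul_lt_mul_right hlt (by positivity)
    rw [gaussTerm_mul_gaussTerm, gaussTerm, coeff_mul, ← add_sum_erase _ _ hmem,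
      IsUltrametricDist.norm_add_eq_max_of_norm_ne_norm hrest.ne', max_eq_left hrest.le]
  refine ⟨fun n => ?_, fun n hn => ?_⟩ <;>
    obtain ⟨i, j, hij, hle⟩ := exists_gaussTerm_mul_le ht f g n <;> rw [htop]
  · exact hle.trans
      (mul_le_mul (hf.1 i) (hg.1 j) (gaussTerm_nonneg ht g j) (gaussTerm_nonneg ht f M))
  · exact hle.trans_lt (hf.gaussTerm_mul_lt ht hg (by omega))

theorem IsDominantIndex.iterate_dX [CharZero K] (ht : 0 < t) (hf : IsDominantIndex t f N) :
    IsDominantIndex t (dX^[N] f) 0 := by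
  have hfac : 0 < ‖(N.factorial : K)‖ := norm_pos_iff.2 (Nat.cast_ne_zero.2 N.factorial_ne_zero)
  have htN : 0 < t ^ N := pow_pos ht N
  have hscaled (m : ℕ) :
      gaussTerm t (dX^[N] f) m * t ^ N ≤ ‖(N.factorial : K)‖ * gaussTerm t f (m + N) := by
    rw [gaussTerm_iterate_dX_mul_pow]
    gcongr
    · exact gaussTerm_nonneg ht.le f _
    · exact mul_le_of_le_one_right (norm_nonneg _) (IsUltrametricDist.norm_natCast_le_one _ _)
  have hzero : gaussTerm t (dX^[N] f) 0 * t ^ N = ‖(N.factorial : K)‖ * gaussTerm t f N := by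
    simp [gaussTerm_iterate_dX_mul_pow]
  refine ⟨fun m => le_of_mul_le_mul_right ?_ htN, fun m hm => lt_of_mul_lt_mul_right ?_ htN.le⟩
  · rw [hzero]
    exact (hscaled m).trans (by gcongr; exact hf.1 _)
  · rw [hzero]
    exact (hscaled m).trans_lt (by gcongr; exact hf.2 _ (by omega))

theorem IsDominantIndex.gaussTerm_inv_le (ht : 0 ≤ t) (hf : IsDominantIndex t f 0) (n : ℕ) :
    gaussTerm t f⁻¹ n ≤ ‖constantCoeff f‖⁻¹ := by
  have hf0 : constantCoeff f ≠ 0 := by simpa using hf.coeff_ne_zero ht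
  have hpos : 0 < ‖constantCoeff f‖ := norm_pos_iff.2 hf0
  induction n using Nat.strong_induction_on with
  | _ n ih =>
  rcases n with _ | n
  · simp [gaussTerm, constantCoeff_inv]
  have hrec : coeff 0 f * coeff (n + 1) f⁻¹
      = -∑ p ∈ antidiagonal n, coeff (p.1 + 1) f * coeff p.2 f⁻¹ := by
    have h := congrArg (coeff (n + 1)) (PowerSeries.mul_inv_cancel f hf0)
    rw [coeff_mul, Nat.sum_antidiagonal_succ, coeff_one, if_neg n.succ_ne_zero] at h
    exact eq_neg_of_add_eq_zero_left h
  obtain ⟨⟨i, j⟩, hij, hle⟩ := IsUltrametricDist.exists_norm_finsetSum_le_of_nonempty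
    (HasAntidiagonal.nonempty_antidiagonal n) fun p => coeff (p.1 + 1) f * coeff p.2 f⁻¹
  rw [HasAntidiagonal.mem_antidiagonal] at hij
  have hkey : ‖constantCoeff f‖ * gaussTerm t f⁻¹ (n + 1)
      ≤ gaussTerm t f (i + 1) * gaussTerm t f⁻¹ j := by
    rw [gaussTerm_mul_gaussTerm, show i + 1 + j = n + 1 by omega]
    calc ‖constantCoeff f‖ * gaussTerm t f⁻¹ (n + 1)
        = ‖coeff 0 f * coeff (n + 1) f⁻¹‖ * t ^ (n + 1) := by
          simp [gaussTerm, norm_mul, mul_assoc]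
      _ ≤ ‖coeff (i + 1) f * coeff j f⁻¹‖ * t ^ (n + 1) := by
          rw [hrec, norm_neg]
          gcongr
  have hbound : gaussTerm t f (i + 1) * gaussTerm t f⁻¹ j
      ≤ ‖constantCoeff f‖ * ‖constantCoeff f‖⁻¹ :=
    mul_le_mul (by simpa [gaussTerm] using hf.1 (i + 1)) (ih j (by omega))
      (gaussTerm_nonneg ht _ _) hpos.le
  rw [← mul_le_mul_iff_right₀ hpos]
  exact hkey.trans hbound

end DominantIndex

section RankOne

variable {K : Type} [NontriviallyNormedField K] [IsUltrametricDist K] {s t : ℝ} {x u : K⟦X⟧}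

lemma exists_iterate_dX_eq_mul (hs : 0 < s) (hu : MemBd s u) (hde : dX x = u * x) :
    ∀ k, ∃ v, MemBd s v ∧ dX^[k] x = v * x
  | 0 => ⟨1, memBd_one, by simp⟩
  | k + 1 => by
    obtain ⟨v, hv, hvx⟩ := exists_iterate_dX_eq_mul hs hu hde k
    refine ⟨dX v + v * u, (hv.dX hs).add hs.le (hv.mul hs.le hu), ?_⟩
    rw [Function.iterate_succ_apply', hvx, dX_mul, hde]
    ring

theorem isDominantIndex_zero_of_dX_eq_mul [CharZero K] (ht : 0 < t) (hts : t < s)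
    (hx : MemBd s x) (hu : MemBd s u) (hde : dX x = u * x) (hx0 : x ≠ 0) :
    IsDominantIndex t x 0 := by
  obtain ⟨N, hN⟩ := exists_isDominantIndex ht hts hx hx0
  obtain ⟨v, hv, hvx⟩ := exists_iterate_dX_eq_mul (ht.trans hts) hu hde N
  have hvx0 : IsDominantIndex t (v * x) 0 := hvx ▸ hN.iterate_dX ht
  have hv0 : v ≠ 0 := by
    rintro rfl
    simpa using hvx0.coeff_ne_zero ht.le
  obtain ⟨J, hJ⟩ := exists_isDominantIndex ht hts hv hv0
  have hJN : J + N = 0 := (hJ.mul ht.le hN).unique hvx0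
  rwa [show N = 0 by omega] at hN

end RankOne

lemma unitIn_of_constantCoeff_ne_zero {K : Type} [NontriviallyNormedField K]
    {S : Set K⟦X⟧} {x : K⟦X⟧} (hx : x ∈ S) (hx0 : constantCoeff x ≠ 0) (hinv : x⁻¹ ∈ S) :
    UnitIn S x :=
  ⟨hx, x⁻¹, hinv, PowerSeries.mul_inv_cancel x hx0, PowerSeries.inv_mul_cancel x hx0⟩

theorem rank_one_solution_zero_or_unit_general
    (K : Type) [NontriviallyNormedField K] [CharZero K]
    (hna : IsNonarchimedean fun x : K => ‖x‖)
    (r : ℝ) (hr : 0 < r) :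
    (∀ x u : PowerSeries K, x ∈ convRing K r → u ∈ convRing K r → dX x = u * x →
        x = 0 ∨ UnitIn (convRing K r) x) ∧
      ∀ x u : PowerSeries K, x ∈ bdRing K r → u ∈ bdRing K r → dX x = u * x →
        x = 0 ∨ UnitIn (bdRing K r) x := by
  have := IsUltrametricDist.isUltrametricDist_of_isNonarchimedean_norm hna
  have hr2 : r / 2 ∈ Set.Ioo 0 r := ⟨half_pos hr, half_lt_self hr⟩
  constructor
  · intro x u hx hu hde
    refine or_iff_not_imp_left.2 fun hx0 => ?_
    have hdom : ∀ t ∈ Set.Ioo 0 r, IsDominantIndex t x 0 := fun t ht => by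
      obtain ⟨s, hts, hsr⟩ := exists_between ht.2
      exact isDominantIndex_zero_of_dX_eq_mul ht.1 hts (hx s (ht.1.trans hts) hsr)
        (hu s (ht.1.trans hts) hsr) hde hx0
    refine unitIn_of_constantCoeff_ne_zero hx ?_ fun t ht htr => ?_
    · simpa using (hdom _ hr2).coeff_ne_zero hr2.1.le
    · exact memBd_iff.2 ⟨_, (hdom t ⟨ht, htr⟩).gaussTerm_inv_le ht.le⟩
  · intro x u hx hu hde
    refine or_iff_not_imp_left.2 fun hx0 => ?_
    have hdom : ∀ t ∈ Set.Ioo 0 r, IsDominantIndex t x 0 := fun t ht =>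
      isDominantIndex_zero_of_dX_eq_mul ht.1 ht.2 hx hu hde hx0
    refine unitIn_of_constantCoeff_ne_zero hx ?_ ?_
    · simpa using (hdom _ hr2).coeff_ne_zero hr2.1.le
    · exact memBd_iff.2 ⟨_, fun n => gaussTerm_le_of_forall_lt hr fun t ht =>
        (hdom t ht).gaussTerm_inv_le ht.1.le n⟩

/-- A solution of a rank-one differential equation `∂_X(x) = u·x` in
`K{X/r}` (resp. `K[[X/r]]₀`) is zero or a unit of that ring. -/
theorem rank_one_solution_zero_or_unit
    (K : Type) [NontriviallyNormedField K] [CompleteSpace K] [CharZero K]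
    (hna : IsNonarchimedean fun x : K => ‖x‖)
    (r : ℝ) (hr : 0 < r) :
    (∀ x u : PowerSeries K, x ∈ convRing K r → u ∈ convRing K r → dX x = u * x →
        x = 0 ∨ UnitIn (convRing K r) x) ∧
      ∀ x u : PowerSeries K, x ∈ bdRing K r → u ∈ bdRing K r → dX x = u * x →
        x = 0 ∨ UnitIn (bdRing K r) x :=
  rank_one_solution_zero_or_unit_general K hna r hr

end Ohkubo
end
end

section
/- Let (π_i)_{i∈ℕ} be a sequence of positive reals such that (π_{i+1}/π_i) is nondecreasing and sup_i π_{i+1}/π_i ≤ r(K,∂). Let B_π = {a ∈ K^ℕ : sup_i |a_i| π_i < ∞}, with norm |a|_π = sup_i |a_i| π_i. Let q ∈ K^ℕ be finitely supported and not identically zero, and define A_q : K^ℕ → K^ℕ by (A_q a)_i = Σ binom(k,j) · (∂^h(j!·q_j)/h!) · a_k, the sum running over all h, j, k ∈ ℕ with k ≥ j and h + k − j = i. Then A_q maps B_π into B_π, and its operator norm equals sup_j |j!·q_j|·π_0/π_j; that is, sup{ |A_q a|_π / |a|_π : a ∈ B_π, a ≠ 0 } = sup_j |j!·q_j|·π_0/π_j.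 -/
open scoped Classical
noncomputable section

namespace Ohkubo

/-- The action of the twisted polynomial with coefficients `q` (supported in degrees
`≤ n`) on a sequence `a`, given by
`(A_q a)_i = Σ_{k ≥ j, h+k-j=i} C(k,j) (∂^h(j! q_j)/h!) a_k`. -/
def twistAct {K : Type} [Field K] (d : K → K) (n : ℕ) (q : ℕ → K) (a : ℕ → K) : ℕ → K :=
  fun i =>
    ∑ j ∈ Finset.range (n + 1), ∑ k ∈ Finset.Icc j (i + j),
      (Nat.choose k j : K)
        * (d^[i + j - k] ((j.factorial : K) * q j) / ((i + j - k).factorial : K)) * a k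

section NA
variable {K : Type} [NontriviallyNormedField K]

lemma na_natCast_le_one (hna : IsNonarchimedean fun x : K => ‖x‖) (n : ℕ) : ‖(n : K)‖ ≤ 1 := by
  induction n with
  | zero => simp
  | succ n ih =>
    push_cast
    exact le_trans (hna _ _) (max_le ih (by simp))

lemma na_intCast_le_one (hna : IsNonarchimedean fun x : K => ‖x‖) (u : ℤ) : ‖(u : K)‖ ≤ 1 := by
  rcases Int.natAbs_eq u with h | h <;> rw [h]
  · rw [Int.cast_natCast]; exact na_natCast_le_one hna _
  · rw [Int.cast_neg, norm_neg, Int.cast_natCast]; exact na_natCast_le_one hna _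

lemma na_sum_le (hna : IsNonarchimedean fun x : K => ‖x‖) {α : Type} {B : ℝ} (hB : 0 ≤ B)
    (s : Finset α) (g : α → K) (h : ∀ i ∈ s, ‖g i‖ ≤ B) : ‖∑ i ∈ s, g i‖ ≤ B := by
  classical
  induction s using Finset.induction with
  | empty => simpa using hB
  | @insert a s ha ih =>
    rw [Finset.sum_insert ha]
    exact le_trans (hna _ _) (max_le (h _ (Finset.mem_insert_self _ _))
      (ih fun i hi => h i (Finset.mem_insert_of_mem hi)))

lemma na_sum_lt (hna : IsNonarchimedean fun x : K => ‖x‖) {α : Type} {B : ℝ} (hB : 0 < B)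
    (s : Finset α) (g : α → K) (h : ∀ i ∈ s, ‖g i‖ < B) : ‖∑ i ∈ s, g i‖ < B := by
  classical
  induction s using Finset.induction with
  | empty => simpa using hB
  | @insert a s ha ih =>
    rw [Finset.sum_insert ha]
    exact lt_of_le_of_lt (hna _ _) (max_lt (h _ (Finset.mem_insert_self _ _))
      (ih fun i hi => h i (Finset.mem_insert_of_mem hi)))

end NA

section Der
variable {K : Type} [Field K] {d : K → K}

lemma d_zero (hd : IsDerivation d) : d 0 = 0 := by
  have := hd.map_add 0 0
  simp only [add_zero] at this
  exact (left_eq_add.mp this)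

lemma d_one (hd : IsDerivation d) : d 1 = 0 := by
  have := hd.leibniz 1 1
  simp only [mul_one, one_mul] at this
  exact (left_eq_add.mp this)

lemma d_natCast (hd : IsDerivation d) (n : ℕ) : d (n : K) = 0 := by
  induction n with
  | zero => simpa using d_zero hd
  | succ n ih =>
    push_cast
    rw [hd.map_add, ih, d_one hd, add_zero]

lemma d_sum (hd : IsDerivation d) {α : Type} (s : Finset α) (g : α → K) :
    d (∑ i ∈ s, g i) = ∑ i ∈ s, d (g i) := by
  classical
  induction s using Finset.induction with
  | empty => simpa using d_zero hd
  | @insert a s ha ih => rw [Finset.sum_insert ha, hd.map_add, ih, Finset.sum_insert ha]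

lemma d_iter_zero (hd : IsDerivation d) (n : ℕ) : d^[n] (0 : K) = 0 := by
  induction n with
  | zero => rfl
  | succ n ih => rw [Function.iterate_succ_apply', ih, d_zero hd]

lemma d_iter_add (hd : IsDerivation d) (n : ℕ) (x y : K) :
    d^[n] (x + y) = d^[n] x + d^[n] y := by
  induction n generalizing x y with
  | zero => rfl
  | succ n ih => rw [Function.iterate_succ_apply', ih, hd.map_add,
      Function.iterate_succ_apply', Function.iterate_succ_apply']

lemma d_iter_mul (hd : IsDerivation d) (m : ℕ) (x y : K) :
    d^[m] (x * y) = ∑ i ∈ Finset.range (m + 1),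
      (m.choose i : K) * (d^[i] x * d^[m - i] y) := by
  induction m with
  | zero => simp
  | succ m ih =>
    rw [Function.iterate_succ_apply', ih, d_sum hd]
    have hterm : ∀ i ∈ Finset.range (m + 1),
        d ((m.choose i : K) * (d^[i] x * d^[m - i] y)) =
          (m.choose i : K) * (d^[i + 1] x * d^[m - i] y)
          + (m.choose i : K) * (d^[i] x * d^[m - i + 1] y) := by
      intro i _
      rw [hd.leibniz ((m.choose i : K)) _, d_natCast hd, zero_mul, zero_add,
        hd.leibniz (d^[i] x) _, Function.iterate_succ_apply' d i x,
        Function.iterate_succ_apply' d (m - i) y]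
      ring
    rw [Finset.sum_congr rfl hterm, Finset.sum_add_distrib]
    rw [Finset.sum_choose_succ_mul (fun i j => d^[i] x * d^[j] y) m]
    have h1 : ∀ i ∈ Finset.range (m + 1),
        (m.choose i : K) * (d^[i] x * d^[m - i + 1] y)
          = (m.choose i : K) * (d^[i] x * d^[m + 1 - i] y) := by
      intro i hi
      rw [Finset.mem_range] at hi
      rw [Nat.succ_sub (Nat.lt_succ_iff.mp hi)]
    rw [Finset.sum_congr rfl h1]
    ring

lemma taylor_mul [CharZero K] (hd : IsDerivation d) (m : ℕ) (x y : K) :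
    d^[m] (x * y) / (m.factorial : K) = ∑ i ∈ Finset.range (m + 1),
      (d^[i] x / (i.factorial : K)) * (d^[m - i] y / ((m - i).factorial : K)) := by
  rw [d_iter_mul hd, Finset.sum_div]
  refine Finset.sum_congr rfl fun i hi => ?_
  rw [Finset.mem_range, Nat.lt_succ_iff] at hi
  rw [Nat.cast_choose K hi]
  have h1 : ((m.factorial : ℕ) : K) ≠ 0 := Nat.cast_ne_zero.mpr (Nat.factorial_ne_zero m)
  have h2 : ((i.factorial : ℕ) : K) ≠ 0 := Nat.cast_ne_zero.mpr (Nat.factorial_ne_zero i)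
  have h3 : (((m - i).factorial : ℕ) : K) ≠ 0 := Nat.cast_ne_zero.mpr (Nat.factorial_ne_zero _)
  field_simp

end Der

section Residue
variable {K : Type} [NontriviallyNormedField K]

lemma residueChar_spec (h : residueChar K ≠ 0) :
    (residueChar K).Prime ∧ ‖((residueChar K : ℕ) : K)‖ < 1 := by
  by_cases hex : ∃ p : ℕ, p.Prime ∧ ‖(p : K)‖ < 1
  · simpa only [residueChar, dif_pos hex] using hex.choose_spec
  · exact absurd (by simp [residueChar, dif_neg hex]) h

lemma residueChar_zero_no_prime (h : residueChar K = 0) {p : ℕ} (hp : p.Prime) :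
    ¬ ‖(p : K)‖ < 1 := by
  intro hlt
  have hex : ∃ p : ℕ, p.Prime ∧ ‖(p : K)‖ < 1 := ⟨p, hp, hlt⟩
  have := hex.choose_spec.1.two_le
  rw [residueChar, dif_pos hex] at h
  omega

lemma norm_nat_one_of_residueChar_zero (hna : IsNonarchimedean fun x : K => ‖x‖)
    (h : residueChar K = 0) : ∀ m : ℕ, m ≠ 0 → ‖(m : K)‖ = 1 := by
  intro m
  induction m using Nat.strong_induction_on with
  | _ m ih =>
    intro hm
    rcases eq_or_ne m 1 with rfl | hm1
    · simp
    · have h2 : 2 ≤ m := by omega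
      have hpf : m.minFac.Prime := Nat.minFac_prime hm1
      obtain ⟨u, hu⟩ := Nat.minFac_dvd m
      have hu0 : u ≠ 0 := by rintro rfl; simp at hu; omega
      have hult : u < m := by
        have h3 := hpf.two_le
        have : 2 * u ≤ m := by rw [hu]; exact Nat.mul_le_mul_right u hpf.two_le
        omega
      have hmin : ‖(m.minFac : K)‖ = 1 :=
        le_antisymm (na_natCast_le_one hna _)
          (not_lt.mp (residueChar_zero_no_prime h hpf))
      rw [hu]
      push_cast
      rw [norm_mul, hmin, one_mul]
      exact ih u hult hu0

lemma norm_factored {p : ℕ} (hp : p.Prime) (m : ℕ) [CharZero K] :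
    ‖((m.factorial : ℕ) : K)‖
      = ‖(p : K)‖ ^ ((m.factorial).factorization p) * ‖((m.factorial / p ^ ((m.factorial).factorization p) : ℕ) : K)‖ := by
  conv_lhs => rw [← Nat.ordProj_mul_ordCompl_eq_self m.factorial p]
  push_cast
  rw [norm_mul, norm_pow]

lemma norm_coprime_one (hna : IsNonarchimedean fun x : K => ‖x‖) [CharZero K]
    {p m : ℕ} (hp : p.Prime) (hplt : ‖(p : K)‖ < 1) (hm : ¬ p ∣ m) (hm0 : m ≠ 0) :
    ‖(m : K)‖ = 1 := by
  have hcop : Nat.Coprime p m := (Nat.Prime.coprime_iff_not_dvd hp).mpr hm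
  have hic : IsCoprime (p : ℤ) (m : ℤ) := by
    rw [Int.isCoprime_iff_gcd_eq_one]
    exact_mod_cast hcop
  obtain ⟨a, b, hab⟩ := hic
  have hK : (a : K) * (p : K) + (b : K) * (m : K) = 1 := by
    have := congrArg (fun z : ℤ => (z : K)) hab
    push_cast at this
    simpa using this
  have h1 : ‖(a : K) * (p : K)‖ < 1 := by
    rw [norm_mul]
    calc ‖(a : K)‖ * ‖(p : K)‖ ≤ 1 * ‖(p : K)‖ :=
          mul_le_mul_of_nonneg_right (na_intCast_le_one hna a) (norm_nonneg _)
    _ = ‖(p : K)‖ := one_mul _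
    _ < 1 := hplt
  have h2 : (1 : ℝ) ≤ max ‖(a : K) * (p : K)‖ ‖(b : K) * (m : K)‖ := by
    have := hna ((a : K) * (p : K)) ((b : K) * (m : K))
    rw [hK] at this
    simpa using this
  have h3 : (1 : ℝ) ≤ ‖(b : K) * (m : K)‖ := by
    rcases max_cases ‖(a : K) * (p : K)‖ ‖(b : K) * (m : K)‖ with ⟨heq, _⟩ | ⟨heq, _⟩
    · rw [heq] at h2; linarith
    · rw [heq] at h2; exact h2
  have h4 : (1 : ℝ) ≤ ‖(m : K)‖ := by
    rw [norm_mul] at h3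
    nlinarith [na_intCast_le_one hna b, norm_nonneg ((m : K)), norm_nonneg ((b : K))]
  exact le_antisymm (na_natCast_le_one hna m) h4

lemma omega_pos [CharZero K] : 0 < omegaK K := by
  rw [omegaK]
  split
  · norm_num
  · rename_i h
    have hp := (residueChar_spec h).1
    have : ((residueChar K : ℕ) : K) ≠ 0 := Nat.cast_ne_zero.mpr (by omega)
    exact Real.rpow_pos_of_pos (norm_pos_iff.mpr this) _

lemma omega_le_one [CharZero K] : omegaK K ≤ 1 := by
  rw [omegaK]
  split
  · norm_num
  · rename_i h
    have hp := (residueChar_spec h).1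
    have hlt := (residueChar_spec h).2
    refine Real.rpow_le_one (norm_nonneg _) hlt.le ?_
    have h2 : (2 : ℝ) ≤ (residueChar K : ℝ) := by exact_mod_cast hp.two_le
    have : (0:ℝ) < (residueChar K : ℝ) - 1 := by linarith
    positivity

lemma norm_factorial_ge (hna : IsNonarchimedean fun x : K => ‖x‖) [CharZero K] (m : ℕ) :
    omegaK K ^ m ≤ ‖((m.factorial : ℕ) : K)‖ := by
  by_cases h : residueChar K = 0
  · rw [norm_nat_one_of_residueChar_zero hna h m.factorial (Nat.factorial_ne_zero m)]
    rw [omegaK, if_pos h, one_pow]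
  · set p := residueChar K with hpdef
    have hp : p.Prime := (residueChar_spec h).1
    have hplt : ‖(p : K)‖ < 1 := (residueChar_spec h).2
    have hppos : (0 : ℝ) < ‖(p : K)‖ := by
      have : ((p : ℕ) : K) ≠ 0 := Nat.cast_ne_zero.mpr (by have := hp.two_le; omega)
      exact norm_pos_iff.mpr this
    haveI : Fact p.Prime := ⟨hp⟩
    set v := (m.factorial).factorization p with hv
    have hunit : ‖((m.factorial / p ^ v : ℕ) : K)‖ = 1 := by
      refine norm_coprime_one hna hp hplt (Nat.not_dvd_ordCompl hp (Nat.factorial_ne_zero m)) ?_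
      exact Nat.ordCompl_pos p (Nat.factorial_ne_zero m) |>.ne'
    rw [norm_factored hp m, hunit, mul_one, ← hv]
    -- now : omegaK K ^ m ≤ ‖(p:K)‖ ^ v
    have hleg : (p - 1) * padicValNat p (m.factorial) = m - (p.digits m).sum :=
      sub_one_mul_padicValNat_factorial m
    have hvval : v = padicValNat p (m.factorial) := Nat.factorization_def _ hp
    have hexp : (v : ℝ) * ((p : ℝ) - 1) ≤ (m : ℝ) := by
      have h1 : (p - 1) * v ≤ m := by rw [hvval, hleg]; omega
      have h2 : ((p - 1 : ℕ) : ℝ) * (v : ℝ) ≤ (m : ℝ) := by exact_mod_cast h1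
      have h3 : ((p - 1 : ℕ) : ℝ) = (p : ℝ) - 1 := by
        have := hp.two_le
        push_cast [Nat.cast_sub (by omega : 1 ≤ p)]
        ring
      rw [h3] at h2
      linarith
    rw [omegaK, if_neg h, ← hpdef]
    have hb0 : (0 : ℝ) < ‖(p : K)‖ := hppos
    have hb1 : ‖(p : K)‖ ≤ 1 := hplt.le
    have hpm1 : (0 : ℝ) < (p : ℝ) - 1 := by
      have : (2 : ℝ) ≤ (p : ℝ) := by exact_mod_cast hp.two_le
      linarith
    calc (‖(p : K)‖ ^ (((p : ℝ) - 1)⁻¹)) ^ m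
        = ‖(p : K)‖ ^ (((p : ℝ) - 1)⁻¹ * m) := by
          rw [← Real.rpow_natCast (‖(p : K)‖ ^ (((p : ℝ) - 1)⁻¹)) m, ← Real.rpow_mul hb0.le]
      _ ≤ ‖(p : K)‖ ^ ((v : ℕ) : ℝ) := by
          refine Real.rpow_le_rpow_of_exponent_ge hb0 hb1 ?_
          rw [inv_mul_eq_div, le_div_iff₀ hpm1]
          push_cast
          linarith
      _ = ‖(p : K)‖ ^ v := Real.rpow_natCast _ v

end Residue

section Op
variable {K : Type} [NontriviallyNormedField K] {d : K → K}

/-- a nonnegative bound for `d`. -/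
lemma bound_nonneg (hdb : IsBoundedMap d) :
    ∃ C : ℝ, 0 ≤ C ∧ ∀ x : K, ‖d x‖ ≤ C * ‖x‖ := by
  obtain ⟨C₀, hC₀⟩ := hdb
  refine ⟨max C₀ 0, le_max_right _ _, fun x => ?_⟩
  exact le_trans (hC₀ x) (mul_le_mul_of_nonneg_right (le_max_left _ _) (norm_nonneg _))

lemma iter_bound {C : ℝ} (hC0 : 0 ≤ C) (hC : ∀ x : K, ‖d x‖ ≤ C * ‖x‖) (n : ℕ) (x : K) :
    ‖d^[n] x‖ ≤ C ^ n * ‖x‖ := by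
  induction n generalizing x with
  | zero => simp
  | succ n ih =>
    rw [Function.iterate_succ_apply']
    calc ‖d (d^[n] x)‖ ≤ C * ‖d^[n] x‖ := hC _
    _ ≤ C * (C ^ n * ‖x‖) := mul_le_mul_of_nonneg_left (ih x) hC0
    _ = C ^ (n + 1) * ‖x‖ := by ring

lemma opSet_nonempty (n : ℕ) :
    {t : ℝ | ∃ v : K, v ≠ 0 ∧ t = ‖d^[n] v‖ / ‖v‖}.Nonempty :=
  ⟨‖d^[n] 1‖ / ‖(1 : K)‖, 1, one_ne_zero, rfl⟩

lemma opSet_bddAbove {C : ℝ} (hC0 : 0 ≤ C) (hC : ∀ x : K, ‖d x‖ ≤ C * ‖x‖) (n : ℕ) :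
    BddAbove {t : ℝ | ∃ v : K, v ≠ 0 ∧ t = ‖d^[n] v‖ / ‖v‖} := by
  refine ⟨C ^ n, fun t ht => ?_⟩
  obtain ⟨v, hv, rfl⟩ := ht
  rw [div_le_iff₀ (norm_pos_iff.mpr hv)]
  exact iter_bound hC0 hC n v

lemma opNorm_eq (n : ℕ) : opNormOn (fun x : K => ‖x‖) (d^[n])
    = sSup {t : ℝ | ∃ v : K, v ≠ 0 ∧ t = ‖d^[n] v‖ / ‖v‖} := rfl

lemma opNorm_nonneg (hdb : IsBoundedMap d) (n : ℕ) :
    0 ≤ opNormOn (fun x : K => ‖x‖) (d^[n]) := by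
  obtain ⟨C, hC0, hC⟩ := bound_nonneg hdb
  have h1 : ‖d^[n] 1‖ / ‖(1 : K)‖ ∈ {t : ℝ | ∃ v : K, v ≠ 0 ∧ t = ‖d^[n] v‖ / ‖v‖} :=
    ⟨1, one_ne_zero, rfl⟩
  exact le_trans (by positivity) (le_csSup (opSet_bddAbove hC0 hC n) h1)

lemma opNorm_bound (hd : IsDerivation d) (hdb : IsBoundedMap d) (n : ℕ) (x : K) :
    ‖d^[n] x‖ ≤ opNormOn (fun x : K => ‖x‖) (d^[n]) * ‖x‖ := by
  obtain ⟨C, hC0, hC⟩ := bound_nonneg hdb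
  rcases eq_or_ne x 0 with rfl | hx
  · rw [d_iter_zero hd n]; simp
  · have hmem : ‖d^[n] x‖ / ‖x‖ ∈ {t : ℝ | ∃ v : K, v ≠ 0 ∧ t = ‖d^[n] v‖ / ‖v‖} :=
      ⟨x, hx, rfl⟩
    have := le_csSup (opSet_bddAbove hC0 hC n) hmem
    rw [div_le_iff₀ (norm_pos_iff.mpr hx)] at this
    exact this.trans_eq rfl

lemma spNorm_nonneg (hdb : IsBoundedMap d) : 0 ≤ spNormK d := by
  refine le_csInf ⟨opNormOn (fun x : K => ‖x‖) (d^[1]) ^ (((1:ℕ) : ℝ)⁻¹), 1, le_refl 1, rfl⟩ ?_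
  rintro t ⟨n, hn, rfl⟩
  exact Real.rpow_nonneg (opNorm_nonneg hdb n) _

lemma spNorm_exists_le (hdb : IsBoundedMap d) {σ : ℝ} (hσ : spNormK d < σ) :
    ∃ m : ℕ, 1 ≤ m ∧ opNormOn (fun x : K => ‖x‖) (d^[m]) ≤ σ ^ m := by
  have hne : {t : ℝ | ∃ n : ℕ, 1 ≤ n ∧
      t = (opNormOn (fun x : K => ‖x‖) (d^[n])) ^ ((n : ℝ)⁻¹)}.Nonempty :=
    ⟨opNormOn (fun x : K => ‖x‖) (d^[1]) ^ (((1:ℕ) : ℝ)⁻¹), 1, le_refl 1, rfl⟩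
  obtain ⟨t, ⟨m, hm, rfl⟩, hlt⟩ := exists_lt_of_csInf_lt hne hσ
  refine ⟨m, hm, ?_⟩
  have h0 := opNorm_nonneg hdb m
  have hm0 : m ≠ 0 := by omega
  calc opNormOn (fun x : K => ‖x‖) (d^[m])
      = ((opNormOn (fun x : K => ‖x‖) (d^[m])) ^ ((m : ℝ)⁻¹)) ^ m :=
        (Real.rpow_inv_natCast_pow h0 hm0).symm
  _ ≤ σ ^ m := pow_le_pow_left₀ (Real.rpow_nonneg h0 _) hlt.le m

/-- Growth lemma: beyond the spectral norm we have geometric growth. -/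
lemma growth (hd : IsDerivation d) (hdb : IsBoundedMap d) {σ : ℝ} (hσ : spNormK d < σ) :
    ∃ M : ℝ, 1 ≤ M ∧ ∀ (h : ℕ) (x : K), ‖d^[h] x‖ ≤ M * σ ^ h * ‖x‖ := by
  have hσ0 : 0 < σ := lt_of_le_of_lt (spNorm_nonneg hdb) hσ
  obtain ⟨C, hC0, hC⟩ := bound_nonneg hdb
  set B := max C 1 with hB
  have hB1 : 1 ≤ B := le_max_right _ _
  have hCB : C ≤ B := le_max_left _ _
  obtain ⟨m, hm1, hAm⟩ := spNorm_exists_le hdb hσ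
  by_cases hcase : B ≤ σ
  · refine ⟨1, le_refl 1, fun h x => ?_⟩
    rw [one_mul]
    calc ‖d^[h] x‖ ≤ C ^ h * ‖x‖ := iter_bound hC0 hC h x
    _ ≤ σ ^ h * ‖x‖ := by
        apply mul_le_mul_of_nonneg_right _ (norm_nonneg _)
        exact pow_le_pow_left₀ hC0 (hCB.trans hcase) h
  · push_neg at hcase
    have hBσ : 1 ≤ B / σ := (one_le_div hσ0).mpr hcase.le
    refine ⟨(B / σ) ^ m, by simpa using pow_le_pow_left₀ zero_le_one hBσ m, fun h x => ?_⟩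
    have key : ∀ q t : ℕ, ‖d^[m * q + t] x‖ ≤ (σ ^ m) ^ q * (C ^ t * ‖x‖) := by
      intro q
      induction q with
      | zero => intro t; simpa using iter_bound hC0 hC t x
      | succ q ih =>
        intro t
        have hidx : m * (q + 1) + t = m + (m * q + t) := by ring
        rw [hidx, Function.iterate_add_apply]
        calc ‖d^[m] (d^[m * q + t] x)‖
            ≤ opNormOn (fun x : K => ‖x‖) (d^[m]) * ‖d^[m * q + t] x‖ :=
              opNorm_bound hd hdb m _
        _ ≤ σ ^ m * ((σ ^ m) ^ q * (C ^ t * ‖x‖)) := by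
              apply mul_le_mul hAm (ih t) (norm_nonneg _) (by positivity)
        _ = (σ ^ m) ^ (q + 1) * (C ^ t * ‖x‖) := by ring
    have hmod := Nat.div_add_mod h m
    have hle := key (h / m) (h % m)
    rw [hmod] at hle
    have htm : h % m ≤ m := (Nat.mod_lt h (by omega)).le
    calc ‖d^[h] x‖ ≤ (σ ^ m) ^ (h / m) * (C ^ (h % m) * ‖x‖) := hle
    _ ≤ σ ^ (m * (h / m)) * ((σ ^ (h % m) * (B / σ) ^ (h % m)) * ‖x‖) := by
        rw [← pow_mul]
        apply mul_le_mul_of_nonneg_left _ (by positivity)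
        apply mul_le_mul_of_nonneg_right _ (norm_nonneg _)
        rw [mul_comm (σ ^ (h % m)), div_pow, div_mul_eq_mul_div,
          mul_div_assoc, div_self (by positivity), mul_one]
        exact pow_le_pow_left₀ hC0 hCB _
    _ = σ ^ (m * (h / m) + h % m) * ((B / σ) ^ (h % m) * ‖x‖) := by rw [pow_add]; ring
    _ = σ ^ h * ((B / σ) ^ (h % m) * ‖x‖) := by rw [hmod]
    _ = (B / σ) ^ (h % m) * σ ^ h * ‖x‖ := by ring
    _ ≤ (B / σ) ^ m * σ ^ h * ‖x‖ := by
        refine mul_le_mul_of_nonneg_right (mul_le_mul_of_nonneg_right ?_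
          (pow_nonneg hσ0.le h)) (norm_nonneg x)
        exact pow_le_pow_right₀ hBσ htm

end Op

section Keystone
variable {K : Type} [NontriviallyNormedField K] [CharZero K] {d : K → K}

lemma core (hna : IsNonarchimedean fun x : K => ‖x‖) (hd : IsDerivation d)
    (hdb : IsBoundedMap d) {σ r' : ℝ} (hσ : spNormK d < σ) (hr'0 : 0 < r')
    (hr'σ : r' * σ < omegaK K) (h : ℕ) (x : K) :
    ‖d^[h] x / ((h.factorial : ℕ) : K)‖ * r' ^ h ≤ ‖x‖ := by
  have hσ0 : 0 < σ := lt_of_le_of_lt (spNorm_nonneg hdb) hσ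
  obtain ⟨M, hM1, hM⟩ := growth hd hdb hσ
  have hM0 : 0 < M := lt_of_lt_of_le zero_lt_one hM1
  set ω := omegaK K with hω
  have hω0 : 0 < ω := omega_pos
  set θ := r' * σ / ω with hθ
  have hθ0 : 0 ≤ θ := by positivity
  have hθ1 : θ < 1 := (div_lt_one hω0).mpr hr'σ
  set f : K → ℕ → ℝ := fun z i => ‖d^[i] z / ((i.factorial : ℕ) : K)‖ * r' ^ i with hf
  have hfnn : ∀ z i, 0 ≤ f z i := fun z i => by positivity
  have hfbound : ∀ z i, f z i ≤ M * θ ^ i * ‖z‖ := by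
    intro z i
    have h1 : ω ^ i ≤ ‖((i.factorial : ℕ) : K)‖ := norm_factorial_ge hna i
    have h2 : (0 : ℝ) < ω ^ i := pow_pos hω0 i
    have h3 : f z i = ‖d^[i] z‖ * r' ^ i / ‖((i.factorial : ℕ) : K)‖ := by
      simp only [hf, norm_div]; ring
    rw [h3]
    calc ‖d^[i] z‖ * r' ^ i / ‖((i.factorial : ℕ) : K)‖
        ≤ ‖d^[i] z‖ * r' ^ i / ω ^ i := by
          apply div_le_div_of_nonneg_left (by positivity) h2 h1
    _ ≤ (M * σ ^ i * ‖z‖) * r' ^ i / ω ^ i := by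
          apply (div_le_div_iff_of_pos_right h2).mpr
          exact mul_le_mul_of_nonneg_right (hM i z) (by positivity)
    _ = M * θ ^ i * ‖z‖ := by rw [hθ, div_pow, mul_pow]; ring
  rcases eq_or_ne x 0 with rfl | hx0
  · rw [d_iter_zero hd h]
    simp
  set N : K → ℝ := fun z => sSup (Set.range (f z)) with hN
  have hbdd : ∀ z, BddAbove (Set.range (f z)) := by
    intro z
    refine ⟨M * ‖z‖, ?_⟩
    rintro t ⟨i, rfl⟩
    calc f z i ≤ M * θ ^ i * ‖z‖ := hfbound z i
    _ ≤ M * 1 * ‖z‖ := by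
        apply mul_le_mul_of_nonneg_right _ (norm_nonneg _)
        exact mul_le_mul_of_nonneg_left (pow_le_one₀ hθ0 hθ1.le) hM0.le
    _ = M * ‖z‖ := by ring
  have hN_ge : ∀ z i, f z i ≤ N z := fun z i => le_csSup (hbdd z) ⟨i, rfl⟩
  have hf0 : ∀ z, f z 0 = ‖z‖ := by
    intro z
    simp [hf]
  have hN_pos : ∀ z, z ≠ 0 → 0 < N z := by
    intro z hz
    calc (0:ℝ) < ‖z‖ := norm_pos_iff.mpr hz
    _ = f z 0 := (hf0 z).symm
    _ ≤ N z := hN_ge z 0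
  have hN_le : ∀ z, N z ≤ M * ‖z‖ := by
    intro z
    refine csSup_le ⟨f z 0, 0, rfl⟩ ?_
    rintro t ⟨i, rfl⟩
    calc f z i ≤ M * θ ^ i * ‖z‖ := hfbound z i
    _ ≤ M * 1 * ‖z‖ := by
        apply mul_le_mul_of_nonneg_right _ (norm_nonneg _)
        exact mul_le_mul_of_nonneg_left (pow_le_one₀ hθ0 hθ1.le) hM0.le
    _ = M * ‖z‖ := by ring
  have attain : ∀ z, z ≠ 0 → ∃ i0, f z i0 = N z ∧ ∀ i < i0, f z i < N z := by
    intro z hz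
    have hz0 : 0 < ‖z‖ := norm_pos_iff.mpr hz
    obtain ⟨n0, hn0⟩ := exists_pow_lt_of_lt_one (by positivity : (0:ℝ) < 1 / M) hθ1
    have htail : ∀ i, n0 < i → f z i < ‖z‖ := by
      intro i hi
      calc f z i ≤ M * θ ^ i * ‖z‖ := hfbound z i
      _ ≤ M * θ ^ n0 * ‖z‖ := by
          apply mul_le_mul_of_nonneg_right _ (norm_nonneg _)
          exact mul_le_mul_of_nonneg_left
            (pow_le_pow_of_le_one hθ0 hθ1.le hi.le) hM0.le
      _ < M * (1 / M) * ‖z‖ := by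
          apply mul_lt_mul_of_pos_right _ hz0
          exact mul_lt_mul_of_pos_left hn0 hM0
      _ = ‖z‖ := by field_simp
    have hex : ∃ i, f z i = N z := by
      obtain ⟨i1, hi1mem, hi1⟩ := Finset.exists_max_image (Finset.range (n0 + 1)) (f z)
        ⟨0, by simp⟩
      refine ⟨i1, le_antisymm (hN_ge z i1) (csSup_le ⟨f z 0, 0, rfl⟩ ?_)⟩
      rintro t ⟨i, rfl⟩
      by_cases hcase : i ≤ n0
      · exact hi1 i (Finset.mem_range.mpr (by omega))
      · calc f z i ≤ ‖z‖ := (htail i (by omega)).le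
        _ = f z 0 := (hf0 z).symm
        _ ≤ f z i1 := hi1 0 (Finset.mem_range.mpr (by omega))
    exact ⟨Nat.find hex, Nat.find_spec hex,
      fun i hi => lt_of_le_of_ne (hN_ge z i) (Nat.find_min hex hi)⟩
  have supermult : ∀ y w : K, y ≠ 0 → w ≠ 0 → N y * N w ≤ N (y * w) := by
    intro y w hy hw
    obtain ⟨i0, hi0, hi0min⟩ := attain y hy
    obtain ⟨j0, hj0, hj0min⟩ := attain w hw
    have hNy := hN_pos y hy
    have hNw := hN_pos w hw
    have hrpow : ∀ k : ℕ, (0:ℝ) < r' ^ k := fun k => pow_pos hr'0 k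
    set u : ℕ → K → K := fun i z => d^[i] z / ((i.factorial : ℕ) : K) with hu
    have hmem : i0 ∈ Finset.range (i0 + j0 + 1) := Finset.mem_range.mpr (by omega)
    have hid : u (i0 + j0) (y * w)
        = ∑ i ∈ Finset.range (i0 + j0 + 1), u i y * u ((i0 + j0) - i) w := by
      rw [hu]
      simpa using taylor_mul hd (i0 + j0) y w
    have hnu : ∀ (z : K) (i : ℕ), ‖u i z‖ = f z i / r' ^ i := by
      intro z i
      rw [eq_div_iff (hrpow i).ne']
    have hmainnorm : ‖u i0 y * u j0 w‖ = N y * N w / r' ^ (i0 + j0) := by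
      rw [norm_mul, hnu, hnu, hi0, hj0, pow_add]
      field_simp
    have hB' : (0:ℝ) < N y * N w / r' ^ (i0 + j0) := by positivity
    have hS' : ‖∑ i ∈ (Finset.range (i0 + j0 + 1)).erase i0, u i y * u ((i0 + j0) - i) w‖
        < N y * N w / r' ^ (i0 + j0) := by
      refine na_sum_lt hna hB' _ _ ?_
      intro i hi
      rw [Finset.mem_erase, Finset.mem_range] at hi
      obtain ⟨hne, hlt⟩ := hi
      set j := i0 + j0 - i with hj
      have hij : i + j = i0 + j0 := by omega
      have hterm : ‖u i y * u j w‖ = f y i * f w j / r' ^ (i0 + j0) := by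
        rw [norm_mul, hnu, hnu, ← hij, pow_add]
        field_simp
      rw [hterm]
      apply div_lt_div_of_pos_right ?_ (hrpow _) |>.trans_le (le_refl _)
      · -- f y i * f w j < N y * N w
        rcases lt_or_gt_of_ne hne with hlt0 | hgt0
        · calc f y i * f w j ≤ f y i * N w :=
              mul_le_mul_of_nonneg_left (hN_ge w j) (hfnn y i)
          _ < N y * N w := mul_lt_mul_of_pos_right (hi0min i hlt0) hNw
        · have hjlt : j < j0 := by omega
          calc f y i * f w j ≤ N y * f w j :=
              mul_le_mul_of_nonneg_right (hN_ge y i) (hfnn w j)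
          _ < N y * N w := mul_lt_mul_of_pos_left (hj0min j hjlt) hNy
    have hsplit : u i0 y * u j0 w
        = (∑ i ∈ Finset.range (i0 + j0 + 1), u i y * u ((i0 + j0) - i) w)
          - ∑ i ∈ (Finset.range (i0 + j0 + 1)).erase i0, u i y * u ((i0 + j0) - i) w := by
      rw [← Finset.add_sum_erase _ _ hmem]
      simp [Nat.add_sub_cancel]
    have hmax : ‖u i0 y * u j0 w‖
        ≤ max ‖∑ i ∈ Finset.range (i0 + j0 + 1), u i y * u ((i0 + j0) - i) w‖
            ‖∑ i ∈ (Finset.range (i0 + j0 + 1)).erase i0, u i y * u ((i0 + j0) - i) w‖ := by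
      rw [hsplit, sub_eq_add_neg]
      exact le_trans (hna _ _) (by simp only [norm_neg]; rfl)
    have hfullge : N y * N w / r' ^ (i0 + j0)
        ≤ ‖∑ i ∈ Finset.range (i0 + j0 + 1), u i y * u ((i0 + j0) - i) w‖ := by
      rw [hmainnorm] at hmax
      rcases max_cases ‖∑ i ∈ Finset.range (i0 + j0 + 1), u i y * u ((i0 + j0) - i) w‖
          ‖∑ i ∈ (Finset.range (i0 + j0 + 1)).erase i0, u i y * u ((i0 + j0) - i) w‖ with
        ⟨heq, _⟩ | ⟨heq, _⟩
      · rwa [heq] at hmax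
      · rw [heq] at hmax
        exact absurd hS' (not_lt.mpr hmax)
    calc N y * N w = (N y * N w / r' ^ (i0 + j0)) * r' ^ (i0 + j0) := by
          field_simp
    _ ≤ ‖∑ i ∈ Finset.range (i0 + j0 + 1), u i y * u ((i0 + j0) - i) w‖ * r' ^ (i0 + j0) :=
          mul_le_mul_of_nonneg_right hfullge (hrpow _).le
    _ = f (y * w) (i0 + j0) := by rw [← hid]
    _ ≤ N (y * w) := hN_ge _ _
  have powers : ∀ n : ℕ, 1 ≤ n → (N x) ^ n ≤ N (x ^ n) := by
    intro n hn
    induction n with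
    | zero => omega
    | succ n ih =>
      rcases Nat.eq_or_lt_of_le hn with heq | hlt
      · simp [← heq]
      · have hn1 : 1 ≤ n := by omega
        have hxn : x ^ n ≠ 0 := pow_ne_zero n hx0
        calc (N x) ^ (n + 1) = (N x) ^ n * N x := by ring
        _ ≤ N (x ^ n) * N x :=
            mul_le_mul_of_nonneg_right (ih hn1) (hN_pos x hx0).le
        _ ≤ N (x ^ n * x) := supermult _ _ hxn hx0
        _ = N (x ^ (n + 1)) := by rw [← pow_succ]
  have hNfin : N x ≤ ‖x‖ := by
    by_contra hcon
    push_neg at hcon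
    have hx0' : 0 < ‖x‖ := norm_pos_iff.mpr hx0
    have hratio : 1 < N x / ‖x‖ := (one_lt_div hx0').mpr hcon
    obtain ⟨n, hn⟩ := pow_unbounded_of_one_lt M hratio
    have hn1 : M < (N x / ‖x‖) ^ (n + 1) := by
      calc M < (N x / ‖x‖) ^ n := hn
      _ ≤ (N x / ‖x‖) ^ (n + 1) := pow_le_pow_right₀ hratio.le (by omega)
    have hchain : (N x) ^ (n + 1) < (N x) ^ (n + 1) := by
      calc (N x) ^ (n + 1) ≤ N (x ^ (n + 1)) := powers (n + 1) (by omega)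
      _ ≤ M * ‖x ^ (n + 1)‖ := hN_le _
      _ = M * ‖x‖ ^ (n + 1) := by rw [norm_pow]
      _ < (N x / ‖x‖) ^ (n + 1) * ‖x‖ ^ (n + 1) :=
          mul_lt_mul_of_pos_right hn1 (by positivity)
      _ = (N x) ^ (n + 1) := by
          rw [div_pow]
          field_simp
    exact lt_irrefl _ hchain
  exact le_trans (hN_ge x h) hNfin

lemma keystone (hna : IsNonarchimedean fun x : K => ‖x‖) (hd : IsDerivation d)
    (hdb : IsBoundedMap d) (hs : 0 < spNormK d) (h : ℕ) (x : K) :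
    ‖d^[h] x / ((h.factorial : ℕ) : K)‖ * radius d ^ h ≤ ‖x‖ := by
  set ω := omegaK K with hω
  have hω0 : 0 < ω := omega_pos
  set R := radius d with hR
  have hR0 : 0 < R := div_pos hω0 hs
  have hall : ∀ r', 0 < r' → r' < R →
      ‖d^[h] x / ((h.factorial : ℕ) : K)‖ * r' ^ h ≤ ‖x‖ := by
    intro r' h0 h1
    have hsω : spNormK d < ω / r' := by
      rw [lt_div_iff₀ h0]
      have := (lt_div_iff₀ hs).mp h1
      linarith [this]
    set σ := (spNormK d + ω / r') / 2 with hσdef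
    have hσ1 : spNormK d < σ := by rw [hσdef]; linarith
    have hσ2 : r' * σ < ω := by
      rw [hσdef]
      have h2 : σ < ω / r' := by rw [hσdef]; linarith
      calc r' * ((spNormK d + ω / r') / 2) < r' * (ω / r') := by
            apply mul_lt_mul_of_pos_left _ h0
            linarith
      _ = ω := by field_simp
    exact core hna hd hdb hσ1 h0 hσ2 h x
  set c := ‖d^[h] x / ((h.factorial : ℕ) : K)‖ with hc
  have hc0 : 0 ≤ c := norm_nonneg _
  rcases Nat.eq_zero_or_pos h with rfl | hh
  · have := hall (R / 2) (by positivity) (by linarith)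
    simpa using this
  · by_contra hcon
    push_neg at hcon
    have hcpos : 0 < c := by
      by_contra hle
      push_neg at hle
      have : c * R ^ h ≤ 0 := mul_nonpos_of_nonpos_of_nonneg (le_antisymm hle hc0).le (by positivity)
      nlinarith [norm_nonneg x]
    have hq1 : ‖x‖ / (c * R ^ h) < 1 := (div_lt_one (by positivity)).mpr hcon
    set β : ℝ := (max (‖x‖ / (c * R ^ h)) (1 / 2) + 1) / 2 with hβ
    have hβgt : ‖x‖ / (c * R ^ h) < β := by
      rw [hβ]
      have h1 : ‖x‖ / (c * R ^ h) ≤ max (‖x‖ / (c * R ^ h)) (1 / 2) := le_max_left _ _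
      have h2 : max (‖x‖ / (c * R ^ h)) (1 / 2) < 1 := max_lt hq1 (by norm_num)
      linarith
    have hβ0 : 0 < β := by
      rw [hβ]
      have := le_max_right (‖x‖ / (c * R ^ h)) (1 / 2)
      linarith
    have hβ1 : β < 1 := by
      rw [hβ]
      have h2 : max (‖x‖ / (c * R ^ h)) (1 / 2) < 1 := max_lt hq1 (by norm_num)
      linarith
    set t : ℝ := β ^ ((h : ℝ)⁻¹) with ht
    have ht0 : 0 < t := Real.rpow_pos_of_pos hβ0 _
    have ht1 : t < 1 := by
      refine Real.rpow_lt_one hβ0.le hβ1 ?_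
      have : (0:ℝ) < (h:ℝ) := by exact_mod_cast hh
      positivity
    have hth : t ^ h = β := Real.rpow_inv_natCast_pow hβ0.le (by omega)
    have hr'lt : R * t < R := by
      nth_rewrite 2 [← mul_one R]
      exact mul_lt_mul_of_pos_left ht1 hR0
    have := hall (R * t) (by positivity) hr'lt
    rw [mul_pow, hth] at this
    have hgt : ‖x‖ < c * (R ^ h * β) := by
      have := mul_lt_mul_of_pos_left hβgt (by positivity : (0:ℝ) < c * R ^ h)
      rw [mul_div_cancel₀ _ (by positivity : (c * R ^ h) ≠ 0)] at this
      calc ‖x‖ < c * R ^ h * β := this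
      _ = c * (R ^ h * β) := by ring
    linarith
end Keystone

section Pi

lemma pi_key {π : ℕ → ℝ} {r : ℝ} (hpos : ∀ i, 0 < π i)
    (hmono : Monotone fun i => π (i + 1) / π i)
    (hr : ∀ i, π (i + 1) / π i ≤ r) (i j e : ℕ) (he : e ≤ i) :
    π i * π j ≤ r ^ (i - e) * (π 0 * π (j + e)) := by
  set ρ : ℕ → ℝ := fun l => π (l + 1) / π l with hρ
  have hρpos : ∀ l, 0 < ρ l := fun l => div_pos (hpos (l + 1)) (hpos l)
  have hr0 : 0 ≤ r := le_trans (hρpos 0).le (hr 0)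
  have hprod : ∀ a b : ℕ, π (a + b) = π a * ∏ l ∈ Finset.range b, ρ (a + l) := by
    intro a b
    induction b with
    | zero => simp
    | succ b ih =>
      rw [Finset.prod_range_succ, ← mul_assoc, ← ih, ← Nat.add_assoc]
      show π (a + b + 1) = π (a + b) * (π (a + b + 1) / π (a + b))
      rw [mul_div_cancel₀ _ (hpos (a + b)).ne']
  have hpi : π i = π 0 * ((∏ l ∈ Finset.range e, ρ l) * ∏ l ∈ Finset.range (i - e), ρ (e + l)) := by
    have h1 : π (0 + (e + (i - e))) = π 0 * ∏ l ∈ Finset.range (e + (i - e)), ρ (0 + l) :=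
      hprod 0 (e + (i - e))
    rw [Finset.prod_range_add] at h1
    simp only [Nat.zero_add] at h1
    rw [show e + (i - e) = i by omega] at h1
    exact h1
  have hpj : π (j + e) = π j * ∏ l ∈ Finset.range e, ρ (j + l) := hprod j e
  have hb1 : (∏ l ∈ Finset.range e, ρ l) ≤ ∏ l ∈ Finset.range e, ρ (j + l) := by
    refine Finset.prod_le_prod (fun l _ => (hρpos l).le) (fun l _ => ?_)
    exact hmono (Nat.le_add_left l j)
  have hb2 : (∏ l ∈ Finset.range (i - e), ρ (e + l)) ≤ r ^ (i - e) := by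
    calc (∏ l ∈ Finset.range (i - e), ρ (e + l)) ≤ ∏ l ∈ Finset.range (i - e), r :=
          Finset.prod_le_prod (fun l _ => (hρpos _).le) (fun l _ => hr (e + l))
    _ = r ^ (i - e) := by rw [Finset.prod_const, Finset.card_range]
  calc π i * π j
      = (π 0 * π j) * ((∏ l ∈ Finset.range e, ρ l) * ∏ l ∈ Finset.range (i - e), ρ (e + l)) := by
        rw [hpi]; ring
    _ ≤ (π 0 * π j) * ((∏ l ∈ Finset.range e, ρ (j + l)) * r ^ (i - e)) := by
        apply mul_le_mul_of_nonneg_left _ (mul_pos (hpos 0) (hpos j)).le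
        apply mul_le_mul hb1 hb2 (Finset.prod_nonneg fun l _ => (hρpos _).le)
          (Finset.prod_nonneg fun l _ => (hρpos _).le)
    _ = r ^ (i - e) * (π 0 * (π j * ∏ l ∈ Finset.range e, ρ (j + l))) := by ring
    _ = r ^ (i - e) * (π 0 * π (j + e)) := by rw [← hpj]

end Pi

/-- The twisted polynomial with coefficients `q` acts on the Banach
space `B_π`, with operator norm `sup_j ‖j! q_j‖ π_0 / π_j`. -/
theorem twistAct_operator_norm
    (K : Type) [NontriviallyNormedField K] [CompleteSpace K] [CharZero K]
    (hna : IsNonarchimedean fun x : K => ‖x‖)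
    (d : K → K) (hd : IsDerivation d) (hd0 : d ≠ 0) (hdb : IsBoundedMap d)
    (π : ℕ → ℝ) (hpos : ∀ i, 0 < π i)
    (hmono : Monotone fun i => π (i + 1) / π i)
    (hsup : ∀ i, π (i + 1) / π i ≤ radius d)
    (n : ℕ) (q : ℕ → K) (hqsupp : ∀ j, n < j → q j = 0) (hq0 : ∃ j, q j ≠ 0) :
    (∀ a : ℕ → K, BddAbove (Set.range fun i => ‖a i‖ * π i) →
        BddAbove (Set.range fun i => ‖twistAct d n q a i‖ * π i)) ∧
      sSup {t : ℝ | ∃ a : ℕ → K, BddAbove (Set.range fun i => ‖a i‖ * π i) ∧ a ≠ 0 ∧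
            t = sSup (Set.range fun i => ‖twistAct d n q a i‖ * π i)
                / sSup (Set.range fun i => ‖a i‖ * π i)}
        = sSup (Set.range fun j : ℕ => ‖(j.factorial : K) * q j‖ * π 0 / π j) := by
  -- the spectral norm is positive (otherwise the hypotheses are contradictory)
  have hs : 0 < spNormK d := by
    rcases (spNorm_nonneg hdb).lt_or_eq with h | h
    · exact h
    · exfalso
      have hrad : radius d = 0 := by rw [radius, ← h, div_zero]
      have h1 := hsup 0
      rw [hrad] at h1
      exact absurd h1 (not_le.mpr (div_pos (hpos 1) (hpos 0)))
  have hr0 : 0 < radius d := div_pos omega_pos hs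
  set r := radius d with hrdef
  have hkey : ∀ (h : ℕ) (c : K), ‖d^[h] c / ((h.factorial : ℕ) : K)‖ ≤ ‖c‖ / r ^ h := by
    intro h c
    rw [le_div_iff₀ (pow_pos hr0 h)]
    exact keystone hna hd hdb hs h c
  set g : ℕ → ℝ := fun j => ‖((j.factorial : ℕ) : K) * q j‖ * π 0 / π j with hg
  have hgnn : ∀ j, 0 ≤ g j := by
    intro j
    have := hpos j
    have := hpos 0
    positivity
  have hgz : ∀ j, n < j → g j = 0 := by
    intro j hj
    simp only [hg, hqsupp j hj, mul_zero, norm_zero, zero_mul, zero_div]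
  obtain ⟨j0, hj0mem, hj0max'⟩ := Finset.exists_max_image (Finset.range (n + 1)) g
    ⟨0, Finset.mem_range.mpr (by omega)⟩
  have hj0le : j0 ≤ n := by
    have := Finset.mem_range.mp hj0mem
    omega
  have hj0max : ∀ j, g j ≤ g j0 := by
    intro j
    by_cases hj : j ≤ n
    · exact hj0max' j (Finset.mem_range.mpr (by omega))
    · rw [hgz j (by omega)]
      exact hgnn j0
  have hMg : sSup (Set.range g) = g j0 := by
    refine IsGreatest.csSup_eq ⟨⟨j0, rfl⟩, ?_⟩
    rintro t ⟨j, rfl⟩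
    exact hj0max j
  -- the fundamental upper bound
  have hupper : ∀ a : ℕ → K, BddAbove (Set.range fun i => ‖a i‖ * π i) →
      ∀ i, ‖twistAct d n q a i‖ * π i
        ≤ g j0 * sSup (Set.range fun i => ‖a i‖ * π i) := by
    intro a hba i
    set Sa := sSup (Set.range fun i => ‖a i‖ * π i) with hSadef
    have hmem0 : ‖a 0‖ * π 0 ∈ Set.range fun i => ‖a i‖ * π i := ⟨0, rfl⟩
    have hSa0 : 0 ≤ Sa := le_trans (mul_nonneg (norm_nonneg _) (hpos 0).le) (le_csSup hba hmem0)
    have hak : ∀ k, ‖a k‖ ≤ Sa / π k := by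
      intro k
      rw [le_div_iff₀ (hpos k)]
      exact le_csSup hba ⟨k, rfl⟩
    have hB0 : 0 ≤ g j0 * Sa / π i := by
      have := hpos i
      have := hgnn j0
      positivity
    rw [← le_div_iff₀ (hpos i)]
    simp only [twistAct]
    refine na_sum_le hna hB0 _ _ ?_
    intro j hj
    refine na_sum_le hna hB0 _ _ ?_
    intro k hk
    rw [Finset.mem_Icc] at hk
    rw [Finset.mem_range] at hj
    set h' := i + j - k with hh'
    set c : K := ((j.factorial : ℕ) : K) * q j with hc
    have base : π i * π j ≤ r ^ h' * (π 0 * π k) := by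
      have hkey2 := pi_key hpos hmono hsup i j (k - j) (by omega)
      rw [show j + (k - j) = k by omega, show i - (k - j) = i + j - k by omega] at hkey2
      exact hkey2
    have step : ‖c‖ / r ^ h' * (Sa / π k) ≤ ‖c‖ * π 0 / π j * Sa / π i := by
      have l1 : ‖c‖ / r ^ h' * (Sa / π k) = ‖c‖ * Sa / (r ^ h' * π k) := by
        rw [div_mul_div_comm]
      have l2 : ‖c‖ * π 0 / π j * Sa / π i = ‖c‖ * Sa * π 0 / (π j * π i) := by
        field_simp
      rw [l1, l2, div_le_div_iff₀ (mul_pos (pow_pos hr0 h') (hpos k))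
        (mul_pos (hpos j) (hpos i))]
      · calc ‖c‖ * Sa * (π j * π i) = (‖c‖ * Sa) * (π i * π j) := by ring
        _ ≤ (‖c‖ * Sa) * (r ^ h' * (π 0 * π k)) :=
            mul_le_mul_of_nonneg_left base (by positivity)
        _ = ‖c‖ * Sa * π 0 * (r ^ h' * π k) := by ring
    calc ‖(k.choose j : K) * (d^[i + j - k] ((j.factorial : K) * q j)
            / ((i + j - k).factorial : K)) * a k‖
        = ‖(k.choose j : K)‖ * ‖d^[h'] c / ((h'.factorial : ℕ) : K)‖ * ‖a k‖ := by
          rw [norm_mul, norm_mul]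
    _ ≤ 1 * (‖c‖ / r ^ h') * (Sa / π k) := by
          apply mul_le_mul _ (hak k) (norm_nonneg _) (by positivity)
          · exact mul_le_mul (na_natCast_le_one hna _) (hkey h' c) (norm_nonneg _)
              zero_le_one
    _ = ‖c‖ / r ^ h' * (Sa / π k) := by rw [one_mul]
    _ ≤ ‖c‖ * π 0 / π j * Sa / π i := step
    _ = g j * Sa / π i := by rw [hg]
    _ ≤ g j0 * Sa / π i := by
          apply (div_le_div_iff_of_pos_right (hpos i)).mpr
          exact mul_le_mul_of_nonneg_right (hj0max j) hSa0
  -- part 1: boundedness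
  have part1 : ∀ a : ℕ → K, BddAbove (Set.range fun i => ‖a i‖ * π i) →
      BddAbove (Set.range fun i => ‖twistAct d n q a i‖ * π i) := by
    intro a hba
    refine ⟨g j0 * sSup (Set.range fun i => ‖a i‖ * π i), ?_⟩
    rintro t ⟨i, rfl⟩
    exact hupper a hba i
  refine ⟨part1, ?_⟩
  -- the distinguished element: the indicator of j0
  set a0 : ℕ → K := fun k => if k = j0 then 1 else 0 with ha0def
  have ha0bdd : ∀ i, ‖a0 i‖ * π i ≤ π j0 := by
    intro i
    by_cases hi : i = j0
    · subst hi; simp [ha0def]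
    · simp [ha0def, hi, (hpos j0).le]
  have hba0 : BddAbove (Set.range fun i => ‖a0 i‖ * π i) := by
    refine ⟨π j0, ?_⟩
    rintro t ⟨i, rfl⟩
    exact ha0bdd i
  have hSa0 : sSup (Set.range fun i => ‖a0 i‖ * π i) = π j0 := by
    refine IsGreatest.csSup_eq ⟨⟨j0, by simp [ha0def]⟩, ?_⟩
    rintro t ⟨i, rfl⟩
    exact ha0bdd i
  have ha0ne : a0 ≠ 0 := by
    intro hcon
    have := congrFun hcon j0
    simp [ha0def] at this
  have hA0 : twistAct d n q a0 0 = ((j0.factorial : ℕ) : K) * q j0 := by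
    simp only [twistAct, Nat.zero_add, Finset.Icc_self, Finset.sum_singleton,
      Nat.sub_self, Function.iterate_zero_apply, Nat.factorial_zero, Nat.cast_one,
      div_one, Nat.choose_self, one_mul]
    rw [Finset.sum_eq_single j0]
    · simp [ha0def]
    · intro j _ hjne
      simp [ha0def, hjne]
    · intro hcon
      exact absurd (Finset.mem_range.mpr (by omega)) hcon
  have hup0 : ∀ i, ‖twistAct d n q a0 i‖ * π i ≤ ‖((j0.factorial : ℕ) : K) * q j0‖ * π 0 := by
    intro i
    have := hupper a0 hba0 i
    rw [hSa0] at this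
    calc ‖twistAct d n q a0 i‖ * π i ≤ g j0 * π j0 := this
    _ = ‖((j0.factorial : ℕ) : K) * q j0‖ * π 0 := by
        rw [hg]
        rw [div_mul_cancel₀ _ (hpos j0).ne']
  have hNa0 : sSup (Set.range fun i => ‖twistAct d n q a0 i‖ * π i)
      = ‖((j0.factorial : ℕ) : K) * q j0‖ * π 0 := by
    refine IsGreatest.csSup_eq ⟨⟨0, by show ‖twistAct d n q a0 0‖ * π 0 = _; rw [hA0]⟩, ?_⟩
    rintro t ⟨i, rfl⟩
    exact hup0 i
  have hmemT : g j0 ∈ {t : ℝ | ∃ a : ℕ → K, BddAbove (Set.range fun i => ‖a i‖ * π i) ∧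
      a ≠ 0 ∧ t = sSup (Set.range fun i => ‖twistAct d n q a i‖ * π i)
        / sSup (Set.range fun i => ‖a i‖ * π i)} := by
    refine ⟨a0, hba0, ha0ne, ?_⟩
    rw [hNa0, hSa0, hg]
  have hubT : ∀ t ∈ {t : ℝ | ∃ a : ℕ → K, BddAbove (Set.range fun i => ‖a i‖ * π i) ∧
      a ≠ 0 ∧ t = sSup (Set.range fun i => ‖twistAct d n q a i‖ * π i)
        / sSup (Set.range fun i => ‖a i‖ * π i)}, t ≤ g j0 := by
    rintro t ⟨a, hba, hane, rfl⟩
    have hex : ∃ i, a i ≠ 0 := by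
      by_contra hcon
      push_neg at hcon
      exact hane (funext fun i => hcon i)
    obtain ⟨i1, hi1⟩ := hex
    have hSapos : 0 < sSup (Set.range fun i => ‖a i‖ * π i) := by
      calc (0:ℝ) < ‖a i1‖ * π i1 := mul_pos (norm_pos_iff.mpr hi1) (hpos i1)
      _ ≤ _ := le_csSup hba ⟨i1, rfl⟩
    rw [div_le_iff₀ hSapos]
    refine csSup_le ⟨‖twistAct d n q a 0‖ * π 0, 0, rfl⟩ ?_
    rintro s ⟨i, rfl⟩
    exact hupper a hba i
  rw [IsGreatest.csSup_eq ⟨hmemT, hubT⟩, ← hMg]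

end Ohkubo
end
end

section
/- Let q_0, …, q_n ∈ K be not all zero and let r ∈ (0, r(K,∂)]. For a ∈ K[[X]], set P·a = Σ_{i=0}^n g_0(q_i)·∂_X^i(a) ∈ K[[X]]. Then there exists r_0 ∈ (0, r) such that for every t ∈ [r_0, r): every a ∈ K[[X/t]]_0 with P·a = 0 lies in K{X/r}; that is, { a ∈ K[[X/t]]_0 : P·a = 0 } = { a ∈ K{X/r} : P·a = 0 }. -/
open scoped Classical
noncomputable section

namespace Ohkubo

/-! ### Auxiliary lemmas for Statement 12 -/

section Aux12

lemma coeff_dX {K : Type} [Field K] (k : ℕ) (f : PowerSeries K) :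
    PowerSeries.coeff k (dX f) = ((k : K) + 1) * PowerSeries.coeff (k + 1) f := by
  simp [dX]

/-- `(k+1)(k+2)⋯(k+i)` as an element of `K`. -/
def cfac (K : Type) [Field K] (k i : ℕ) : K :=
  ∏ l ∈ Finset.range i, ((k : K) + (l : K) + 1)

lemma coeff_dX_iter {K : Type} [Field K] (i : ℕ) (f : PowerSeries K) (k : ℕ) :
    PowerSeries.coeff k (dX^[i] f) = cfac K k i * PowerSeries.coeff (k + i) f := by
  induction i generalizing f with
  | zero => simp [cfac]
  | succ i ih =>
      rw [Function.iterate_succ_apply, ih (dX f), coeff_dX]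
      simp only [cfac, Finset.prod_range_succ]
      push_cast
      ring_nf

lemma cfac_ne_zero {K : Type} [Field K] [CharZero K] (k i : ℕ) : cfac K k i ≠ 0 := by
  refine Finset.prod_ne_zero_iff.mpr fun l _ => ?_
  have h : (((k + l + 1 : ℕ) : K)) ≠ 0 := Nat.cast_ne_zero.mpr (by omega)
  push_cast at h
  exact h

lemma dX_iter_add {K : Type} [Field K] (i : ℕ) (a b : PowerSeries K) :
    dX^[i] (a + b) = dX^[i] a + dX^[i] b := by
  apply PowerSeries.ext; intro k
  simp [coeff_dX_iter, mul_add]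

lemma dX_iter_sub {K : Type} [Field K] (i : ℕ) (a b : PowerSeries K) :
    dX^[i] (a - b) = dX^[i] a - dX^[i] b := by
  apply PowerSeries.ext; intro k
  simp [coeff_dX_iter, mul_sub]

lemma dX_iter_zero {K : Type} [Field K] (i : ℕ) : dX^[i] (0 : PowerSeries K) = 0 := by
  apply PowerSeries.ext; intro k
  simp [coeff_dX_iter]

lemma dX_iter_smul {K : Type} [Field K] (i : ℕ) (c : K) (a : PowerSeries K) :
    dX^[i] (c • a) = c • dX^[i] a := by
  apply PowerSeries.ext; intro k
  simp [coeff_dX_iter, smul_eq_mul]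
  ring

lemma taylor_zero' {K : Type} [Field K] {d : K → K} (hd : IsDerivation d) :
    taylor d 0 = 0 := by
  have h0 : d 0 = 0 := by
    have h := hd.map_add 0 0
    rw [add_zero] at h
    exact (add_left_cancel (a := d 0) (b := (0 : K)) (by rw [add_zero]; exact h)).symm
  apply PowerSeries.ext; intro j
  simp [taylor, Function.iterate_fixed h0]

/-- The differential operator `P = Σ g₀(qᵢ) ∂_X^i`. -/
def Pop {K : Type} [Field K] (d : K → K) (q : ℕ → K) (n : ℕ) (a : PowerSeries K) :
    PowerSeries K :=
  ∑ i ∈ Finset.range (n + 1), taylor d (q i) * dX^[i] a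

lemma Pop_add {K : Type} [Field K] (d : K → K) (q : ℕ → K) (n : ℕ) (a b : PowerSeries K) :
    Pop d q n (a + b) = Pop d q n a + Pop d q n b := by
  unfold Pop
  rw [← Finset.sum_add_distrib]
  exact Finset.sum_congr rfl fun i _ => by rw [dX_iter_add, mul_add]

lemma Pop_sub {K : Type} [Field K] (d : K → K) (q : ℕ → K) (n : ℕ) (a b : PowerSeries K) :
    Pop d q n (a - b) = Pop d q n a - Pop d q n b := by
  unfold Pop
  rw [← Finset.sum_sub_distrib]
  exact Finset.sum_congr rfl fun i _ => by rw [dX_iter_sub, mul_sub]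

lemma Pop_zero {K : Type} [Field K] (d : K → K) (q : ℕ → K) (n : ℕ) :
    Pop d q n (0 : PowerSeries K) = 0 := by
  unfold Pop
  exact Finset.sum_eq_zero fun i _ => by rw [dX_iter_zero, mul_zero]

lemma Pop_smul {K : Type} [Field K] (d : K → K) (q : ℕ → K) (n : ℕ) (c : K)
    (a : PowerSeries K) : Pop d q n (c • a) = c • Pop d q n a := by
  unfold Pop
  rw [Finset.smul_sum]
  exact Finset.sum_congr rfl fun i _ => by rw [dX_iter_smul, mul_smul_comm]

/-- A power-series solution of `P a = 0` vanishing to order `m` (the top index with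
`q m ≠ 0`) is zero. -/
lemma kernel_unique {K : Type} [Field K] [CharZero K]
    {d : K → K} (hd : IsDerivation d) {n m : ℕ} {q : ℕ → K}
    (hm : q m ≠ 0) (hmn : m ≤ n) (htop : ∀ i, m < i → i ≤ n → q i = 0)
    (a : PowerSeries K) (ha : Pop d q n a = 0)
    (h0 : ∀ j, j < m → PowerSeries.coeff j a = 0) : a = 0 := by
  have key : ∀ N, PowerSeries.coeff N a = 0 := by
    intro N
    induction N using Nat.strong_induction_on with
    | _ N ih =>
      rcases lt_or_ge N m with hNm | hNm
      · exact h0 N hNm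
      obtain ⟨k, rfl⟩ : ∃ k, N = k + m := ⟨N - m, (Nat.sub_add_cancel hNm).symm⟩
      have hc : PowerSeries.coeff k (Pop d q n a) = 0 := by rw [ha]; simp
      unfold Pop at hc
      rw [map_sum] at hc
      rw [Finset.sum_eq_single m ?h1 ?h2] at hc
      case h2 =>
        intro hmem
        exact absurd (Finset.mem_range.mpr (Nat.lt_succ_of_le hmn)) hmem
      case h1 =>
        intro i hi hne
        rcases lt_or_gt_of_ne hne with hlt | hgt
        · rw [PowerSeries.coeff_mul]
          apply Finset.sum_eq_zero
          intro p hp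
          have hpk := Finset.HasAntidiagonal.mem_antidiagonal.mp hp
          rw [coeff_dX_iter, ih (p.2 + i) (by omega)]
          ring
        · rw [htop i hgt (by simpa [Nat.lt_succ_iff] using Finset.mem_range.mp hi),
            taylor_zero' hd, zero_mul, map_zero]
      rw [PowerSeries.coeff_mul] at hc
      rw [Finset.sum_eq_single (0, k) ?h3 ?h4] at hc
      case h4 =>
        intro hmem
        exact absurd (Finset.HasAntidiagonal.mem_antidiagonal.mpr (by simp)) hmem
      case h3 =>
        intro p hp hne
        have hpk := Finset.HasAntidiagonal.mem_antidiagonal.mp hp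
        have hp2 : p.2 < k := by
          rcases Nat.lt_or_ge p.2 k with h | h
          · exact h
          · exfalso
            apply hne
            have : p.2 = k := le_antisymm (by omega) h
            have : p.1 = 0 := by omega
            exact Prod.ext ‹p.1 = 0› ‹p.2 = k›
        rw [coeff_dX_iter, ih (p.2 + m) (by omega)]
        ring
      have ht0 : PowerSeries.coeff 0 (taylor d (q m)) = q m := by
        simp [taylor]
      rw [coeff_dX_iter, ht0] at hc
      rcases mul_eq_zero.mp hc with h | h
      · exact absurd h hm
      rcases mul_eq_zero.mp h with h' | h'
      · exact absurd h' (cfac_ne_zero k m)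
      · exact h'
  exact PowerSeries.ext fun N => by rw [key N, map_zero]

lemma memBd_mono {K : Type} [NontriviallyNormedField K] {s t : ℝ} (hs : 0 ≤ s) (hst : s ≤ t)
    {f : PowerSeries K} (hf : MemBd t f) : MemBd s f := by
  obtain ⟨C, hC⟩ := hf
  refine ⟨C, ?_⟩
  rintro x ⟨i, rfl⟩
  calc gaussTerm s f i ≤ gaussTerm t f i := by
        unfold gaussTerm
        exact mul_le_mul_of_nonneg_left (pow_le_pow_left₀ hs hst i) (norm_nonneg _)
    _ ≤ C := hC ⟨i, rfl⟩

lemma memBd_zero {K : Type} [NontriviallyNormedField K] {s : ℝ} :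
    MemBd s (0 : PowerSeries K) := by
  refine ⟨0, ?_⟩
  rintro x ⟨i, rfl⟩
  simp [gaussTerm]

lemma memBd_add {K : Type} [NontriviallyNormedField K] {s : ℝ} {f g : PowerSeries K}
    (hf : MemBd s f) (hg : MemBd s g) : MemBd s (f + g) := by
  obtain ⟨C, hC⟩ := hf
  obtain ⟨D, hD⟩ := hg
  refine ⟨max (C + D) 0, ?_⟩
  rintro x ⟨i, rfl⟩
  rcases le_or_gt 0 (s ^ i) with h | h
  · have h1 : gaussTerm s f i ≤ C := hC ⟨i, rfl⟩
    have h2 : gaussTerm s g i ≤ D := hD ⟨i, rfl⟩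
    have h3 : gaussTerm s (f + g) i ≤ gaussTerm s f i + gaussTerm s g i := by
      unfold gaussTerm
      rw [map_add, ← add_mul]
      exact mul_le_mul_of_nonneg_right (norm_add_le _ _) h
    calc gaussTerm s (f + g) i ≤ C + D := by linarith
      _ ≤ max (C + D) 0 := le_max_left _ _
  · have : gaussTerm s (f + g) i ≤ 0 := by
      unfold gaussTerm
      exact mul_nonpos_of_nonneg_of_nonpos (norm_nonneg _) h.le
    calc gaussTerm s (f + g) i ≤ 0 := this
      _ ≤ max (C + D) 0 := le_max_right _ _

lemma memBd_smul {K : Type} [NontriviallyNormedField K] {s : ℝ} {f : PowerSeries K}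
    (c : K) (hf : MemBd s f) : MemBd s (c • f) := by
  obtain ⟨C, hC⟩ := hf
  refine ⟨‖c‖ * C, ?_⟩
  rintro x ⟨i, rfl⟩
  have h1 : gaussTerm s f i ≤ C := hC ⟨i, rfl⟩
  have h2 : gaussTerm s (c • f) i = ‖c‖ * gaussTerm s f i := by
    unfold gaussTerm
    rw [map_smul, smul_eq_mul, norm_mul, mul_assoc]
  rw [h2]
  exact mul_le_mul_of_nonneg_left h1 (norm_nonneg c)

/-- The image in `K^m` (first `m` coefficients) of the kernel of `P` inside `K[[X/t]]₀`. -/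
def solSub {K : Type} [NontriviallyNormedField K] (d : K → K) (q : ℕ → K) (n m : ℕ)
    (t : ℝ) : Submodule K (Fin m → K) where
  carrier := {v | ∃ a : PowerSeries K, MemBd t a ∧ Pop d q n a = 0 ∧
      ∀ j : Fin m, v j = PowerSeries.coeff (j : ℕ) a}
  add_mem' := by
    intro v w hv hw
    obtain ⟨a, ha1, ha2, ha3⟩ := hv
    obtain ⟨b, hb1, hb2, hb3⟩ := hw
    refine ⟨a + b, memBd_add ha1 hb1, by rw [Pop_add, ha2, hb2, add_zero], fun j => ?_⟩
    rw [Pi.add_apply, map_add, ha3 j, hb3 j]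
  zero_mem' := ⟨0, memBd_zero, Pop_zero d q n, fun j => by simp⟩
  smul_mem' := by
    intro c v hv
    obtain ⟨a, ha1, ha2, ha3⟩ := hv
    refine ⟨c • a, memBd_smul c ha1, by rw [Pop_smul, ha2, smul_zero], fun j => ?_⟩
    rw [Pi.smul_apply, map_smul, ha3 j]

lemma mem_solSub_iff {K : Type} [NontriviallyNormedField K] {d : K → K} {q : ℕ → K}
    {n m : ℕ} {t : ℝ} {v : Fin m → K} :
    v ∈ solSub d q n m t ↔ ∃ a : PowerSeries K, MemBd t a ∧ Pop d q n a = 0 ∧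
      ∀ j : Fin m, v j = PowerSeries.coeff (j : ℕ) a := Iff.rfl

end Aux12

/-- Kernels of a nonzero twisted polynomial `P = Σ g₀(q_i) ∂_X^i` on
`K[[X/t]]₀` stabilize to the kernel on `K{X/r}` for `t` close enough to `r` from below. -/
theorem kernel_transfer
    (K : Type) [NontriviallyNormedField K] [CompleteSpace K] [CharZero K]
    (hna : IsNonarchimedean fun x : K => ‖x‖)
    (d : K → K) (hd : IsDerivation d) (hd0 : d ≠ 0) (hdb : IsBoundedMap d)
    (n : ℕ) (q : ℕ → K) (hq : ∃ i ≤ n, q i ≠ 0)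
    (r : ℝ) (hr : r ∈ Set.Ioc 0 (radius d)) :
    ∃ r0 : ℝ, 0 < r0 ∧ r0 < r ∧ ∀ t : ℝ, r0 ≤ t → t < r →
      ∀ a : PowerSeries K,
        (a ∈ bdRing K t ∧ (∑ i ∈ Finset.range (n + 1), taylor d (q i) * dX^[i] a) = 0) ↔
          (a ∈ convRing K r ∧
            (∑ i ∈ Finset.range (n + 1), taylor d (q i) * dX^[i] a) = 0) := by
  classical
  have hrpos : 0 < r := hr.1
  -- the top index with nonzero coefficient
  set m := Nat.findGreatest (fun i => q i ≠ 0) n with hmdef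
  obtain ⟨i0, hi0n, hi0⟩ := hq
  have hm : q m ≠ 0 := Nat.findGreatest_spec (P := fun i => q i ≠ 0) hi0n hi0
  have hmn : m ≤ n := Nat.findGreatest_le n
  have htop : ∀ i, m < i → i ≤ n → q i = 0 := fun i h1 h2 =>
    not_not.mp (Nat.findGreatest_is_greatest (P := fun i => q i ≠ 0) h1 h2)
  -- uniqueness of kernel elements given the first m coefficients
  have hkerneq : ∀ a b : PowerSeries K, Pop d q n a = 0 → Pop d q n b = 0 →
      (∀ j : Fin m, PowerSeries.coeff (j : ℕ) a = PowerSeries.coeff (j : ℕ) b) →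
      a = b := by
    intro a b ha hb hab
    have h1 : Pop d q n (a - b) = 0 := by rw [Pop_sub, ha, hb, sub_zero]
    have h2 : a - b = 0 := by
      refine kernel_unique hd hm hmn htop (a - b) h1 ?_
      intro j hj
      rw [map_sub, hab ⟨j, hj⟩, sub_self]
    exact sub_eq_zero.mp h2
  set S : ℝ → Submodule K (Fin m → K) := fun t => solSub d q n m t with hSdef
  have hSmono : ∀ s t : ℝ, 0 < s → s ≤ t → S t ≤ S s := by
    intro s t hs hst v hv
    obtain ⟨a, h1, h2, h3⟩ := mem_solSub_iff.mp hv
    exact mem_solSub_iff.mpr ⟨a, memBd_mono hs.le hst h1, h2, h3⟩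
  -- choose r0 in (r/2, r) minimizing the rank
  set T : Set ℝ := Set.Ioo (r / 2) r with hTdef
  have hT34 : (3 * r / 4) ∈ T := ⟨by linarith, by linarith⟩
  set A : Set ℕ := (fun t => Module.finrank K (S t)) '' T with hAdef
  have hAne : A.Nonempty := ⟨_, ⟨3 * r / 4, hT34, rfl⟩⟩
  obtain ⟨r0, hr0T, hr0e⟩ := Nat.sInf_mem hAne
  have hmin : ∀ t ∈ T, Module.finrank K (S r0) ≤ Module.finrank K (S t) := by
    intro t ht
    have hr0e' : Module.finrank K ↥(S r0) = sInf A := hr0e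
    rw [hr0e']
    exact Nat.sInf_le ⟨t, ht, rfl⟩
  have hr0pos : 0 < r0 := lt_trans (by linarith) hr0T.1
  refine ⟨r0, hr0pos, hr0T.2, ?_⟩
  -- the kernels agree on [r0, r)
  have hWeq : ∀ t, r0 ≤ t → t < r → ∀ a : PowerSeries K, MemBd t a → Pop d q n a = 0 →
      ∀ s, r0 ≤ s → s < r → MemBd s a := by
    intro t h1 h2 a hbd hker s hs1 hs2
    have htT : t ∈ T := ⟨lt_of_lt_of_le hr0T.1 h1, h2⟩
    have hsT : s ∈ T := ⟨lt_of_lt_of_le hr0T.1 hs1, hs2⟩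
    have hts : S t = S r0 :=
      Submodule.eq_of_le_of_finrank_le (hSmono r0 t hr0pos h1) (hmin t htT)
    have hss : S s = S r0 :=
      Submodule.eq_of_le_of_finrank_le (hSmono r0 s hr0pos hs1) (hmin s hsT)
    have hav : (fun j : Fin m => PowerSeries.coeff (j : ℕ) a) ∈ S t :=
      mem_solSub_iff.mpr ⟨a, hbd, hker, fun j => rfl⟩
    rw [hts, ← hss] at hav
    obtain ⟨b, hb1, hb2, hb3⟩ := mem_solSub_iff.mp hav
    have hab : a = b := hkerneq a b hker hb2 fun j => hb3 j
    exact hab ▸ hb1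
  intro t ht1 ht2 a
  constructor
  · rintro ⟨hbd, hker⟩
    have hbd' : MemBd t a := hbd
    have hker' : Pop d q n a = 0 := hker
    refine ⟨?_, hker⟩
    show ∀ s : ℝ, 0 < s → s < r → MemBd s a
    intro s hs0 hsr
    rcases le_or_gt s t with h | h
    · exact memBd_mono hs0.le h hbd'
    · exact hWeq t ht1 ht2 a hbd' hker' s (le_trans ht1 h.le) hsr
  · rintro ⟨hconv, hker⟩
    have hconv' : ∀ s : ℝ, 0 < s → s < r → MemBd s a := hconv
    exact ⟨hconv' t (lt_of_lt_of_le hr0pos ht1) ht2, hker⟩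


end Ohkubo
end
end
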